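/- arXiv:2406.19163 — 8 statements merged into one kernel-verified Lean document; each statement's English description precedes it below -/
import Mathlib

section
/- Let p be an odd prime and let HW(𝔽_{p²}) denote the quotient ring (HahnSeries ℚ (WittVector p (GaloisField p 2))) / (T − p), where T is the Hahn series single 1 1. Then HW(𝔽_{p²}) contains a primitive p-th root of unity: there exists ζ ∈ HW(𝔽_{p²}) with ζ^p = 1 and ζ ≠ 1. -/
noncomputable section

/-- The ideal `(T - p)` of `HahnSeries ℚ (WittVector p 𝔽_{p²})`, where `T = single 1 1`. -/
abbrev HWp2ideal (p : ℕ) [Fact p.Prime] :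
    Ideal (HahnSeries ℚ (WittVector p (GaloisField p 2))) :=
  Ideal.span {HahnSeries.single (1 : ℚ) (1 : WittVector p (GaloisField p 2)) -
    (p : HahnSeries ℚ (WittVector p (GaloisField p 2)))}

/-- The field of Hahn-Witt series `HW(𝔽_{p²})`. -/
abbrev HWp2 (p : ℕ) [Fact p.Prime] : Type :=
  HahnSeries ℚ (WittVector p (GaloisField p 2)) ⧸ HWp2ideal p

/-!
Let `a ∈ 𝕎(𝔽_{p²})` be the Teichmüller lift of a `(p-1)`-st root of `-1` in `𝔽_{p²}`, so that
`π = a X ∈ 𝕎⟦X⟧` satisfies `p + π^(p-1) = p - X^(p-1)`. Write `(Y + 1)^p = Y^p + 1 + p Y r(Y)`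
with `r ∈ ℤ[Y]`, `r(0) = 1`. Hensel's lemma in `𝕎⟦X⟧` gives a unit `t` with `t^p = t r(πt)`,
hence `(1 + πt)^p - 1 = (p + π^(p-1)) πt r(πt)`. The substitution `X ↦ T^(1/(p-1))` sends
`p - X^(p-1)` to `p - T`, so `ζ = 1 + πt` becomes a `p`-th root of unity in `HW(𝔽_{p²})`.
It is not `1`: `πt` becomes a unit Hahn series, whereas `T - p`, with leading coefficient
`-p`, is not a unit.
-/

theorem Nat.two_mul_sub_one_dvd_sq_sub_one {p : ℕ} (hp : Odd p) : 2 * (p - 1) ∣ p ^ 2 - 1 := by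
  rw [show p ^ 2 - 1 = (p + 1) * (p - 1) by simpa using Nat.sq_sub_sq p 1]
  exact mul_dvd_mul_right (even_iff_two_dvd.mp hp.add_one) _

theorem FiniteField.exists_pow_eq_neg_one_of_dvd {K : Type*} [Field K] [Finite K] {n : ℕ}
    (h : 2 * n ∣ Nat.card K - 1) : ∃ c : K, c ^ n = -1 := by
  obtain ⟨g, hg⟩ := IsCyclic.exists_ofOrder_eq_natCard (α := Kˣ)
  obtain ⟨m, hm⟩ := h
  have hcard : orderOf g = m * n * 2 := by rw [hg, Nat.card_units, hm]; ring
  have h2 : IsPrimitiveRoot (g ^ (m * n)) 2 :=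
    (IsPrimitiveRoot.orderOf g).pow (orderOf_pos g) hcard
  refine ⟨(g : K) ^ m, ?_⟩
  rw [← pow_mul, ← Units.val_pow_eq_pow_val]
  exact (IsPrimitiveRoot.coe_units_iff.mpr h2).eq_neg_one_of_two_right

namespace WittVector

variable {p : ℕ} [Fact p.Prime]

theorem teichmuller_neg_one {k : Type*} [CommRing k] [IsDomain k] [CharP k p] (hp : p ≠ 2) :
    teichmuller p (-1 : k) = -1 := by
  have hsq : teichmuller p (-1 : k) * teichmuller p (-1) = 1 := by
    rw [← map_mul, neg_one_mul, neg_neg, map_one]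
  refine (mul_self_eq_one_iff.mp hsq).resolve_left fun h ↦ ?_
  have h0 := congrArg (fun x : WittVector p k ↦ x.coeff 0) h
  simp only [teichmuller_coeff_zero, one_coeff_zero] at h0
  exact Ring.neg_one_ne_one_of_char_ne_two (by rwa [ringChar.eq k p]) h0

theorem exists_pow_eq_neg_one {k : Type*} [Field k] [Finite k] [CharP k p] (hp : p ≠ 2) {n : ℕ}
    (h : 2 * n ∣ Nat.card k - 1) : ∃ a : WittVector p k, a ^ n = -1 :=
  let ⟨c, hc⟩ := FiniteField.exists_pow_eq_neg_one_of_dvd h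
  ⟨teichmuller p c, by rw [← map_pow, hc, teichmuller_neg_one hp]⟩

theorem isUnit_natCast_sub_one {k : Type*} [Field k] [CharP k p] :
    IsUnit ((p : WittVector p k) - 1) := by
  refine isUnit_of_coeff_zero_ne_zero _ ?_
  rw [← constantCoeff_apply, map_sub, map_natCast, map_one, CharP.cast_eq_zero, zero_sub]
  exact neg_ne_zero.mpr one_ne_zero

end WittVector

section Hensel

open Polynomial

theorem Polynomial.exists_X_add_one_pow_eq {p : ℕ} (hp : p.Prime) :
    ∃ r : ℤ[X], (X + 1) ^ p = X ^ p + 1 + C (p : ℤ) * X * r ∧ r.coeff 0 = 1 ∧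
      r.natDegree + 2 ≤ p := by
  obtain ⟨r, hr⟩ := exists_add_pow_prime_eq hp (X : ℤ[X]) 1
  rw [one_pow, mul_one, ← C_eq_natCast] at hr
  have hp0 : (p : ℤ) ≠ 0 := by exact_mod_cast hp.ne_zero
  have hr0 : r.coeff 0 = 1 := by
    have h1 := congrArg (coeff · 1) hr
    simp only [coeff_X_add_one_pow, Nat.choose_one_right, coeff_add, coeff_X_pow, coeff_one,
      mul_assoc, coeff_C_mul, coeff_X_mul, hp.one_lt.ne, ↓reduceIte, one_ne_zero, add_zero,
      zero_add] at h1
    exact (mul_eq_left₀ hp0).mp h1.symm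
  refine ⟨r, hr, hr0, ?_⟩
  have hdeg : (C (p : ℤ) * X * r).natDegree = r.natDegree + 1 := by
    rw [natDegree_mul (by simp [hp.ne_zero]) (by rintro rfl; simp at hr0),
      natDegree_C_mul_X _ hp0]
    ring
  have hle : (C (p : ℤ) * X * r).natDegree ≤ p - 1 := by
    rw [show C (p : ℤ) * X * r = (X + 1) ^ p - X ^ p - 1 by rw [hr]; ring]
    refine natDegree_le_iff_coeff_eq_zero.mpr fun m hm ↦ ?_
    have := hp.one_le
    rcases eq_or_lt_of_le (show p ≤ m by omega) with rfl | hlt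
    · simp [coeff_X_add_one_pow, coeff_one, hp.ne_zero]
    · simp [coeff_X_add_one_pow, coeff_X_pow, coeff_one, Nat.choose_eq_zero_of_lt hlt, hlt.ne',
        (show m ≠ 0 by omega)]
  have := hp.two_le
  omega

variable {B : Type*} [CommRing B] (I : Ideal B) [HenselianRing B I]

theorem HenselianRing.exists_isUnit_pow_eq_mul_aeval {n : ℕ} {r : ℤ[X]} (hr0 : r.coeff 0 = 1)
    (hdeg : r.natDegree + 2 ≤ n) (hunit : IsUnit ((n : B) - 1)) {π : B} (hπ : π ∈ I) :
    ∃ t : B, IsUnit t ∧ t ^ n = t * aeval (π * t) r := by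
  set f : B[X] := X ^ n - X * (r.map (Int.castRingHom B)).comp (C π * X) with hf
  have hmonic : f.Monic := by
    refine monic_X_pow_sub (degree_le_natDegree.trans_lt (WithBot.coe_lt_coe.mpr ?_))
    calc (X * (r.map (Int.castRingHom B)).comp (C π * X)).natDegree
        ≤ 1 + r.natDegree * 1 :=
          natDegree_mul_le.trans (add_le_add natDegree_X_le (natDegree_comp_le.trans
            (Nat.mul_le_mul natDegree_map_le ((natDegree_C_mul_le _ _).trans natDegree_X_le))))
      _ < n := by omega
  -- modulo `I`, `f` becomes `X ^ n - X`, which has the simple root `1` because `n - 1` is a unit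
  have hmap : f.map (Ideal.Quotient.mk I) = X ^ n - X := by
    simp [f, map_comp, Ideal.Quotient.eq_zero_iff_mem.mpr hπ, ← coeff_zero_eq_eval_zero, hr0]
  have hroot : f.eval 1 ∈ I := by
    rw [← Ideal.Quotient.eq_zero_iff_mem, ← eval_map_apply, hmap]
    simp
  have hderiv : IsUnit (Ideal.Quotient.mk I (f.derivative.eval 1)) := by
    rw [← eval_map_apply, ← derivative_map, hmap]
    simpa [derivative_X_pow] using hunit.map (Ideal.Quotient.mk I)
  obtain ⟨t, ht, htI⟩ := HenselianRing.is_henselian f hmonic 1 hroot hderiv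
  refine ⟨t, by simpa using Ideal.mem_jacobson_bot.mp (HenselianRing.jac htI) 1, ?_⟩
  rw [IsRoot.def, hf, eval_sub, eval_mul, eval_pow, eval_X, eval_comp, sub_eq_zero] at ht
  rw [ht, aeval_def, eval₂_eq_eval_map]
  simp

theorem HenselianRing.exists_isUnit_one_add_mul_pow_sub_one_mem_span {p : ℕ} (hp : p.Prime)
    (hunit : IsUnit ((p : B) - 1)) {π : B} (hπ : π ∈ I) :
    ∃ t : B, IsUnit t ∧ (1 + π * t) ^ p - 1 ∈ Ideal.span {(p : B) + π ^ (p - 1)} := by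
  obtain ⟨r, hr, hr0, hdeg⟩ := exists_X_add_one_pow_eq hp
  obtain ⟨t, ht, htr⟩ := exists_isUnit_pow_eq_mul_aeval I hr0 hdeg hunit hπ
  refine ⟨t, ht, Ideal.mem_span_singleton.mpr ⟨π * t * aeval (π * t) r, ?_⟩⟩
  have h := congrArg (aeval (π * t)) hr
  simp only [map_add, map_pow, map_mul, aeval_X, map_one, map_natCast] at h
  have hπp : π ^ p = π ^ (p - 1) * π := (pow_sub_one_mul hp.ne_zero π).symm
  linear_combination h + π ^ p * htr + t * aeval (π * t) r * hπp

end Hensel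

theorem HahnSeries.leadingCoeff_single_sub_C {Γ R : Type*} [AddCommMonoid Γ] [LinearOrder Γ]
    [IsOrderedCancelAddMonoid Γ] [Ring R] {g : Γ} (hg : 0 < g) (r : R) {s : R} (hs : s ≠ 0) :
    (single g r - C s).leadingCoeff = -s := by
  rw [← neg_sub, leadingCoeff_neg, leadingCoeff_sub, C_apply, leadingCoeff_of_single]
  rw [C_apply, orderTop_single hs]
  exact (WithTop.coe_lt_coe.mpr hg).trans_le orderTop_single_le

open HahnSeries in
theorem HahnSeries.exists_pow_eq_one_ne_one_of_mem_span {R : Type*} [CommRing R] [IsDomain R]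
    {q : R} (hq0 : q ≠ 0) (hq : ¬IsUnit q) {n p : ℕ} (hn : n ≠ 0) {f : PowerSeries R}
    (hf : IsUnit f)
    (h : (1 + PowerSeries.X * f) ^ p - 1 ∈ Ideal.span {PowerSeries.C q - PowerSeries.X ^ n}) :
    ∃ ζ : HahnSeries ℚ R ⧸ Ideal.span {single (1 : ℚ) (1 : R) - C q}, ζ ^ p = 1 ∧ ζ ≠ 1 := by
  set φ := PowerSeries.heval (single (n : ℚ)⁻¹ (1 : R))
  have hφX : φ PowerSeries.X = single (n : ℚ)⁻¹ 1 :=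
    PowerSeries.heval_X _ ((WithTop.coe_pos.mpr (by positivity)).trans_le orderTop_single_le)
  have hφ : φ (PowerSeries.C q - PowerSeries.X ^ n) = -(single 1 1 - C q) := by
    rw [map_sub, map_pow, hφX, single_pow, one_pow, nsmul_eq_mul,
      mul_inv_cancel₀ (Nat.cast_ne_zero.mpr hn), PowerSeries.heval_C, ← C_mul_eq_smul, mul_one]
    ring
  refine ⟨Ideal.Quotient.mk _ (φ (1 + PowerSeries.X * f)), ?_, ?_⟩
  · rw [← sub_eq_zero, ← map_pow, ← map_one (Ideal.Quotient.mk _), ← map_sub,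
      Ideal.Quotient.eq_zero_iff_mem, Ideal.mem_span_singleton, ← map_pow, ← map_one φ, ← map_sub]
    have := map_dvd φ (Ideal.mem_span_singleton.mp h)
    rwa [hφ, neg_dvd] at this
  · rw [Ne, ← sub_eq_zero, ← map_one (Ideal.Quotient.mk _), ← map_sub,
      Ideal.Quotient.eq_zero_iff_mem, Ideal.mem_span_singleton, ← map_one φ, ← map_sub,
      add_sub_cancel_left, map_mul, hφX]
    -- the image of `X * f` is a unit, while `single 1 1 - C q` has leading coefficient `-q`
    refine fun hdvd ↦ hq ((IsUnit.neg_iff q).mp ?_)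
    rw [← leadingCoeff_single_sub_C (zero_lt_one' ℚ) 1 hq0, ← isUnit_iff]
    refine isUnit_of_dvd_unit hdvd ((isUnit_iff.mpr ?_).mul (hf.map φ))
    rw [leadingCoeff_of_single]
    exact isUnit_one

/-- For `p` an odd prime, `HW(𝔽_{p²})` contains a primitive `p`-th root of unity. -/
theorem primitive_p_th_root_of_unity_in_HWp2 (p : ℕ) [Fact p.Prime] (hp : Odd p) :
    ∃ ζ : HWp2 p, ζ ^ p = 1 ∧ ζ ≠ 1 := by
  have hprime : p.Prime := Fact.out
  have hp1 : p - 1 ≠ 0 := by have := hprime.two_le; omega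
  obtain ⟨a, ha⟩ : ∃ a : WittVector p (GaloisField p 2), a ^ (p - 1) = -1 :=
    WittVector.exists_pow_eq_neg_one (by rintro rfl; exact absurd hp (by decide))
      (by rw [GaloisField.card p 2 two_ne_zero]; exact Nat.two_mul_sub_one_dvd_sq_sub_one hp)
  have ha_unit : IsUnit a := .of_pow_eq_one (n := 2 * (p - 1)) (by simp [pow_mul', ha]) (by omega)
  have hunit : IsUnit ((p : PowerSeries (WittVector p (GaloisField p 2))) - 1) :=
    PowerSeries.isUnit_iff_constantCoeff.mpr (by simpa using WittVector.isUnit_natCast_sub_one)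
  obtain ⟨t, ht, hζ⟩ := HenselianRing.exists_isUnit_one_add_mul_pow_sub_one_mem_span
    (Ideal.span {PowerSeries.X}) hprime hunit
    (Ideal.mul_mem_left _ (PowerSeries.C a) (Ideal.subset_span rfl))
  rw [mul_pow, ← map_pow, ha, map_neg, map_one, neg_one_mul, ← sub_eq_add_neg,
    ← map_natCast PowerSeries.C, mul_comm _ PowerSeries.X, mul_assoc] at hζ
  exact HahnSeries.exists_pow_eq_one_ne_one_of_mem_span (WittVector.p_nonzero p _)
    (WittVector.irreducible p).not_isUnit hp1 ((ha_unit.map PowerSeries.C).mul ht) hζ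

end
end

section
/- Let p be a prime, k = AlgebraicClosure (ZMod p), and let HW(k̄) denote the quotient ring (HahnSeries ℚ (WittVector p k)) / (T − p), where T is the Hahn series single 1 1. Let φ : HW(k̄) → HW(k̄) be the ring endomorphism induced by applying WittVector.map of the Frobenius x ↦ x^p of k to each Hahn-series coefficient, and let ι : (HahnSeries ℚ (WittVector p (ZMod p))) / (T − p) → HW(k̄) be the ring homomorphism induced by applying WittVector.map of the inclusion ZMod p → k to each coefficient. Then for x ∈ HW(k̄), one has φ(x) = x if and only if x lies in the image of ι; i.e., the fixed subfield of φ in HW(k̄) is exactly HW(𝔽_p). -/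
noncomputable section

/-- The algebraic closure of `𝔽_p`. -/
abbrev Kbar (p : ℕ) [Fact p.Prime] : Type := AlgebraicClosure (ZMod p)

/-- The ideal `(T - p)` of `HahnSeries ℚ (WittVector p (Kbar p))`, where `T = single 1 1`. -/
abbrev HWideal (p : ℕ) [Fact p.Prime] : Ideal (HahnSeries ℚ (WittVector p (Kbar p))) :=
  Ideal.span {HahnSeries.single (1 : ℚ) (1 : WittVector p (Kbar p)) -
    (p : HahnSeries ℚ (WittVector p (Kbar p)))}

/-- The field of Hahn-Witt series `HW(𝔽̄_p)`. -/
abbrev HW (p : ℕ) [Fact p.Prime] : Type :=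
  HahnSeries ℚ (WittVector p (Kbar p)) ⧸ HWideal p

/-- The ideal `(T - p)` of `HahnSeries ℚ (WittVector p (ZMod p))`, where `T = single 1 1`. -/
abbrev HWpideal (p : ℕ) [Fact p.Prime] : Ideal (HahnSeries ℚ (WittVector p (ZMod p))) :=
  Ideal.span {HahnSeries.single (1 : ℚ) (1 : WittVector p (ZMod p)) -
    (p : HahnSeries ℚ (WittVector p (ZMod p)))}

/-- The field of Hahn-Witt series `HW(𝔽_p)`. -/
abbrev HWp (p : ℕ) [Fact p.Prime] : Type :=
  HahnSeries ℚ (WittVector p (ZMod p)) ⧸ HWpideal p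

/-! Write `Φ` for the coefficientwise Frobenius of `HahnSeries ℚ W(𝔽̄_p)`. If `Φ f - f = (T - p) h`,
solve `Φ e - e = -h` coefficientwise: `F - 1` is surjective on `W(𝔽̄_p)` for the Witt Frobenius `F`,
since it is onto modulo `p` by Artin–Schreier theory in `𝔽̄_p` and `W(𝔽̄_p)` is `p`-adically
complete. Then `f + (T - p) e` represents the same class and is fixed by `Φ`, so the coordinates of
all its coefficients satisfy `x ^ p = x`, i.e. lie in `𝔽_p`. -/

open Function

open Polynomial in
theorem IsAlgClosed.surjective_pow_sub_self {K : Type*} [Field K] [IsAlgClosed K] {n : ℕ}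
    (hn : 1 < n) : Surjective fun a : K => a ^ n - a := fun b => by
  obtain ⟨a, ha⟩ := IsAlgClosed.eval_surjective (M := K) (p := X ^ n - X)
    (by rw [FiniteField.X_pow_card_sub_X_natDegree_eq K hn]; omega) b
  exact ⟨a, by simpa using ha⟩

theorem frobenius_eq_self_iff_mem_range_algebraMap {p : ℕ} [Fact p.Prime] {F : Type*} [Field F]
    [CharP F p] [Algebra (ZMod p) F] {x : F} :
    frobenius F p x = x ↔ x ∈ (algebraMap (ZMod p) F).range := by
  rw [frobenius_def, ← Subfield.mem_bot_iff_pow_eq_self, ← ZMod.fieldRange_castHom_eq_bot p,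
    Subsingleton.elim (ZMod.castHom dvd_rfl F) (algebraMap (ZMod p) F)]
  rfl

section RingEndomorphism

variable {A : Type*} [CommRing A] {π : A} (Φ : A →+* A)

theorem map_mem_span_pow_of_map_eq_self (hπ : Φ π = π) {x : A} {n : ℕ}
    (hx : x ∈ Ideal.span {π ^ n}) : Φ x ∈ Ideal.span {π ^ n} := by
  obtain ⟨c, rfl⟩ := Ideal.mem_span_singleton'.mp hx
  rw [map_mul, map_pow, hπ]
  exact Ideal.mul_mem_left _ _ (Ideal.mem_span_singleton_self _)

theorem exists_map_sub_self_sub_mem_span_pow_succ (hπ : Φ π = π)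
    (h : ∀ b, ∃ a, Φ a - a - b ∈ Ideal.span {π}) {b s : A} {n : ℕ}
    (hs : Φ s - s - b ∈ Ideal.span {π ^ n}) :
    ∃ s', s' - s ∈ Ideal.span {π ^ n} ∧ Φ s' - s' - b ∈ Ideal.span {π ^ (n + 1)} := by
  obtain ⟨c, hc⟩ := Ideal.mem_span_singleton'.mp hs
  obtain ⟨a, ha⟩ := h (-c)
  obtain ⟨d, hd⟩ := Ideal.mem_span_singleton'.mp ha
  refine ⟨s + π ^ n * a, by simpa using Ideal.mul_mem_right a _ (Ideal.mem_span_singleton_self _),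
    Ideal.mem_span_singleton'.mpr ⟨d, ?_⟩⟩
  rw [map_add, map_mul, map_pow, hπ]
  linear_combination π ^ n * hd + hc

theorem surjective_map_sub_self_of_isAdicComplete [IsAdicComplete (Ideal.span {π}) A]
    (hπ : Φ π = π) (h : ∀ b, ∃ a, Φ a - a - b ∈ Ideal.span {π}) :
    Surjective fun a => Φ a - a := by
  intro b
  have hpow (n : ℕ) : (Ideal.span {π} ^ n • ⊤ : Submodule A A) = Ideal.span {π ^ n} := by
    rw [smul_eq_mul, Ideal.mul_top, Ideal.span_singleton_pow]
  choose! next hnext_sub hnext using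
    fun n s => exists_map_sub_self_sub_mem_span_pow_succ Φ hπ h (b := b) (s := s) (n := n)
  let s (n : ℕ) : A := Nat.rec 0 next n
  have hs (n : ℕ) : Φ (s n) - s n - b ∈ Ideal.span {π ^ n} := by
    induction n with
    | zero => simp
    | succ n ih => exact hnext n (s n) ih
  have hcauchy {m n : ℕ} (hmn : m ≤ n) :
      s m ≡ s n [SMOD (Ideal.span {π} ^ m • ⊤ : Submodule A A)] := by
    rw [hpow]
    induction n, hmn using Nat.le_induction with
    | base => rfl
    | succ n hmn ih =>
      refine ih.trans (SModEq.sub_mem.mpr ?_).symm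
      exact Ideal.span_singleton_le_span_singleton.mpr (pow_dvd_pow π hmn)
        (hnext_sub n (s n) (hs n))
  obtain ⟨L, hL⟩ := IsPrecomplete.prec inferInstance hcauchy
  refine ⟨L, sub_eq_zero.mp (IsHausdorff.haus (I := Ideal.span {π}) inferInstance _ fun n => ?_)⟩
  have hLn : L - s n ∈ Ideal.span {π ^ n} := by
    simpa only [hpow, SModEq.sub_mem] using (hL n).symm
  rw [hpow, SModEq.sub_mem, sub_zero,
    show Φ L - L - b = Φ (L - s n) - (L - s n) + (Φ (s n) - s n - b) by rw [map_sub]; ring]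
  exact add_mem (sub_mem (map_mem_span_pow_of_map_eq_self Φ hπ hLn) hLn) (hs n)

theorem exists_map_eq_self_sub_mem_span (hπ : Φ π = π) (hsurj : Surjective fun a => Φ a - a)
    {f : A} (hf : Φ f - f ∈ Ideal.span {π}) : ∃ f', Φ f' = f' ∧ f' - f ∈ Ideal.span {π} := by
  obtain ⟨h, hh⟩ := Ideal.mem_span_singleton'.mp hf
  obtain ⟨e, he⟩ := hsurj (-h)
  refine ⟨f + e * π, ?_, by simpa using Ideal.mul_mem_left _ e (Ideal.mem_span_singleton_self π)⟩
  rw [map_add, map_mul, hπ]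
  linear_combination (-hh) + π * he

end RingEndomorphism

namespace WittVector

variable {p : ℕ} [Fact p.Prime]

theorem map_eq_self_iff_mem_range {R S : Type*} [CommRing R] [CommRing S] {f : R →+* R}
    {ι : S →+* R} (h : ∀ a, f a = a ↔ a ∈ ι.range) {x : WittVector p R} :
    map f x = x ↔ x ∈ (map ι).range := by
  constructor
  · intro hx
    have hcoeff (n : ℕ) : x.coeff n ∈ ι.range := (h _).mp (by rw [← map_coeff, hx])
    choose y hy using hcoeff
    exact ⟨mk p y, ext fun n => by rw [map_coeff, coeff_mk, hy]⟩
  · rintro ⟨y, rfl⟩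
    exact ext fun n => by rw [map_coeff, map_coeff, (h _).mpr ⟨_, rfl⟩]

theorem surjective_map_frobenius_sub_self {k : Type*} [CommRing k] [CharP k p] [PerfectRing k p]
    (h : Surjective fun a : k => a ^ p - a) :
    Surjective fun x : WittVector p k => map (_root_.frobenius k p) x - x := by
  refine surjective_map_sub_self_of_isAdicComplete (π := (p : WittVector p k)) _ (map_natCast _ _)
    fun b => ?_
  obtain ⟨t, ht⟩ := h (b.coeff 0)
  refine ⟨teichmuller p t, ?_⟩
  rw [← ker_constantCoeff, RingHom.mem_ker]
  simp only [map_sub, constantCoeff_apply, map_coeff, teichmuller_coeff_zero, frobenius_def]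
  exact sub_eq_zero.mpr ht

end WittVector

namespace HahnSeries

variable {Γ R S : Type*}

theorem exists_map_eq_of_coeff_mem_range [PartialOrder Γ] [Zero R] [Zero S] {F : Type*}
    [FunLike F R S] [ZeroHomClass F R S] (f : F) {y : HahnSeries Γ S}
    (h : ∀ g, y.coeff g ∈ Set.range f) : ∃ x : HahnSeries Γ R, x.map f = y := by
  classical
  choose c hc using h
  refine ⟨⟨fun g => if y.coeff g = 0 then 0 else c g,
    y.isPWO_support.mono fun g hg h0 => hg (if_pos h0)⟩, ?_⟩
  ext g
  by_cases h0 : y.coeff g = 0 <;> simp [h0, hc]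

variable [AddCommMonoid Γ] [PartialOrder Γ] [IsOrderedCancelAddMonoid Γ]

def mapRingHom [Semiring R] [Semiring S] (f : R →+* S) : HahnSeries Γ R →+* HahnSeries Γ S where
  toFun x := x.map f
  map_one' := HahnSeries.map_one f.toMonoidWithZeroHom
  map_mul' _ _ := HahnSeries.map_mul f.toNonUnitalRingHom
  map_zero' := HahnSeries.map_zero f.toZeroHom
  map_add' _ _ := HahnSeries.map_add f.toAddMonoidHom

@[simp]
theorem mapRingHom_apply [Semiring R] [Semiring S] (f : R →+* S) (x : HahnSeries Γ R) :
    mapRingHom f x = x.map f := rfl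

theorem mapRingHom_single [Semiring R] [Semiring S] (f : R →+* S) (a : Γ) (r : R) :
    mapRingHom f (single a r) = single a (f r) :=
  HahnSeries.map_single f.toZeroHom

theorem surjective_mapRingHom_sub_self [CommRing R] {f : R →+* R}
    (h : Surjective fun a => f a - a) :
    Surjective fun x : HahnSeries Γ R => mapRingHom f x - x := fun y => by
  obtain ⟨x, hx⟩ := exists_map_eq_of_coeff_mem_range
    (f.toAddMonoidHom - AddMonoidHom.id R) fun g => h (y.coeff g)
  exact ⟨x, by rw [← hx]; ext; simp⟩

theorem mapRingHom_eq_self_iff_mem_range [CommRing R] [CommRing S] {f : R →+* R}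
    {ι : S →+* R} (h : ∀ a, f a = a ↔ a ∈ ι.range) {x : HahnSeries Γ R} :
    mapRingHom f x = x ↔ x ∈ (mapRingHom (Γ := Γ) ι).range := by
  constructor
  · exact fun hx => exists_map_eq_of_coeff_mem_range ι fun g =>
      (h _).mp (congrArg (coeff · g) hx)
  · rintro ⟨y, rfl⟩
    ext g
    simp only [mapRingHom_apply, map_coeff]
    exact (h _).mpr ⟨_, rfl⟩

end HahnSeries

/-- The fixed subfield of the canonical Frobenius automorphism `φ` of `HW(𝔽̄_p)` is exactly
`HW(𝔽_p)`: an element `x` satisfies `φ x = x` iff `x` lies in the image of the canonical map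
`ι : HW(𝔽_p) → HW(𝔽̄_p)`. Here `φ` is induced by applying `WittVector.map` of the Frobenius of
`𝔽̄_p` to every Hahn-series coefficient, and `ι` is induced by applying `WittVector.map` of the
inclusion `𝔽_p → 𝔽̄_p` to every coefficient. -/
theorem fixed_field_of_frobenius_eq_HWp (p : ℕ) [Fact p.Prime]
    (φ : HW p →+* HW p)
    (hφ : ∀ f : HahnSeries ℚ (WittVector p (Kbar p)),
      φ (Ideal.Quotient.mk (HWideal p) f) =
        Ideal.Quotient.mk (HWideal p)
          (f.map (WittVector.map (frobenius (Kbar p) p))))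
    (ι : HWp p →+* HW p)
    (hι : ∀ f : HahnSeries ℚ (WittVector p (ZMod p)),
      ι (Ideal.Quotient.mk (HWpideal p) f) =
        Ideal.Quotient.mk (HWideal p)
          (f.map (WittVector.map (algebraMap (ZMod p) (Kbar p))))) :
    ∀ x : HW p, φ x = x ↔ x ∈ Set.range ι := by
  set Φ := HahnSeries.mapRingHom (Γ := ℚ) (WittVector.map (p := p) (frobenius (Kbar p) p))
  set ι' := HahnSeries.mapRingHom (Γ := ℚ) (WittVector.map (p := p) (algebraMap (ZMod p) (Kbar p)))
  have hfixed (f) : Φ f = f ↔ f ∈ ι'.range := HahnSeries.mapRingHom_eq_self_iff_mem_range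
    fun _ => WittVector.map_eq_self_iff_mem_range fun _ =>
      frobenius_eq_self_iff_mem_range_algebraMap
  have hT : Φ (HahnSeries.single 1 1 - (p : HahnSeries ℚ (WittVector p (Kbar p)))) =
      HahnSeries.single 1 1 - (p : HahnSeries ℚ (WittVector p (Kbar p))) := by
    rw [map_sub, map_natCast, HahnSeries.mapRingHom_single, map_one]
  intro x
  obtain ⟨f, rfl⟩ := Ideal.Quotient.mk_surjective x
  constructor
  · intro hx
    rw [hφ, Ideal.Quotient.eq] at hx
    obtain ⟨f', hf'_fixed, hf'⟩ := exists_map_eq_self_sub_mem_span Φ hT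
      (HahnSeries.surjective_mapRingHom_sub_self (WittVector.surjective_map_frobenius_sub_self
        (IsAlgClosed.surjective_pow_sub_self (Fact.out : p.Prime).one_lt))) hx
    obtain ⟨g, rfl⟩ := (hfixed f').mp hf'_fixed
    exact ⟨Ideal.Quotient.mk _ g, by rw [hι, Ideal.Quotient.eq]; exact hf'⟩
  · rintro ⟨y, hy⟩
    obtain ⟨g, rfl⟩ := Ideal.Quotient.mk_surjective y
    rw [← hy, hι, hφ]
    exact congrArg _ ((hfixed _).mpr ⟨g, rfl⟩)

end
end

section
/- Let R be a commutative ring, and let r ∈ R be a non-zero-divisor such that R is r-adically complete (complete and separated for the topology defined by the ideal (r)). Call f ∈ HahnSeries ℚ R a null series if for every i ∈ ℚ and every N ∈ ℕ such that f.coeff (i + n) = 0 for all integers n < −N, one has, for every m ∈ ℕ, Σ_{n=0}^{m} f.coeff (i + (n − N)) · r^n ∈ (r^(m+1)) (equivalently, the r-adically convergent sum Σ_{n∈ℤ} f.coeff(i+n) r^n vanishes in R[r^{-1}]). Then the set of null series is exactly the principal ideal of HahnSeries ℚ R generated by the element (single 1 1) − C r, where C r is the constant Hahn series with value r. -/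
/-! Write `T = single 1 1`, so that `((T - r) g)_x = g_{x-1} - r g_x`. For `f = (T - r) g` the
partial sums in the definition of a null series telescope to `g_{i-N-1} - g_{i+m-N} r^{m+1}`;
vanishing of `f` below `i - N` gives `g_{i-N-1-k} = r^k g_{i-N-1}`, one of these is zero since
`supp g` is well-ordered, and `r` is a non-zero-divisor, so `g_{i-N-1} = 0`.
Conversely, for a null series `f` put `g_x = ∑_{n ≥ 0} f_{x+n+1} r^n` (an `r`-adic limit). Then
`g_{x-1} - r g_x = f_x`, and nullity makes `g_x = 0` whenever `f` vanishes on `x - ℕ`, so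
`supp g ⊆ supp f + ℕ` is well-ordered and `g` is a Hahn series with `(T - r) g = f`. -/

noncomputable section

/-- `f ∈ HahnSeries ℚ R` is a *null series* with respect to `r`: for every `i ∈ ℚ` and every
`N ∈ ℕ` such that `f.coeff (i + n) = 0` for every integer `n < -N`, the partial sums
`Σ_{n=0}^{m} f.coeff (i + (n - N)) · r^n` lie in `(r^(m+1))` for all `m`; equivalently, the
`r`-adically convergent sum `Σ_{n ∈ ℤ} f.coeff (i + n) r^n` vanishes in `R[r⁻¹]`. -/
def IsNullSeries {R : Type*} [CommRing R] (r : R) (f : HahnSeries ℚ R) : Prop :=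
  ∀ (i : ℚ) (N : ℕ), (∀ n : ℤ, n < -(N : ℤ) → f.coeff (i + (n : ℚ)) = 0) →
    ∀ m : ℕ,
      (∑ n ∈ Finset.range (m + 1), f.coeff (i + (((n : ℤ) - (N : ℤ) : ℤ) : ℚ)) * r ^ n) ∈
        Ideal.span {r ^ (m + 1)}

open HahnSeries Finset Pointwise

section AdicPowerSeries

variable {R : Type*} [CommRing R] {r : R}

theorem Ideal.span_singleton_pow_smul_top (r : R) (m : ℕ) :
    (Ideal.span {r} ^ m • ⊤ : Submodule R R) = Ideal.span {r ^ m} := by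
  rw [Ideal.smul_eq_mul, Ideal.mul_top, Ideal.span_singleton_pow]

theorem IsHausdorff.eq_zero_of_forall_mem_span_pow (h : IsHausdorff (Ideal.span {r}) R) {x : R}
    (hx : ∀ m : ℕ, x ∈ Ideal.span {r ^ m}) : x = 0 :=
  h.haus x fun m => by rw [SModEq.zero, Ideal.span_singleton_pow_smul_top]; exact hx m

theorem IsPrecomplete.exists_sub_sum_range_mul_pow_mem (h : IsPrecomplete (Ideal.span {r}) R)
    (c : ℕ → R) : ∃ L : R, ∀ m : ℕ, L - ∑ n ∈ range m, c n * r ^ n ∈ Ideal.span {r ^ m} := by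
  have hcauchy {m n : ℕ} (hmn : m ≤ n) :
      ∑ k ∈ range m, c k * r ^ k - ∑ k ∈ range n, c k * r ^ k ∈ Ideal.span {r ^ m} := by
    rw [← sum_range_add_sum_Ico _ hmn, sub_add_cancel_left]
    refine neg_mem (Ideal.sum_mem _ fun k hk => Ideal.mem_span_singleton.2 ?_)
    exact dvd_mul_of_dvd_right (pow_dvd_pow r (mem_Ico.1 hk).1) _
  obtain ⟨L, hL⟩ := h.prec (f := fun m => ∑ n ∈ range m, c n * r ^ n) fun hmn => by
    rw [SModEq.sub_mem, Ideal.span_singleton_pow_smul_top]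
    exact hcauchy hmn
  refine ⟨L, fun m => ?_⟩
  have hm := hL m
  rw [SModEq.sub_mem, Ideal.span_singleton_pow_smul_top] at hm
  rw [← neg_sub]
  exact neg_mem hm

end AdicPowerSeries

section SingleSubC

variable {Γ R : Type*} [AddCommGroup Γ] [CommRing R]

theorem HahnSeries.coeff_single_sub_C_mul [PartialOrder Γ] [IsOrderedAddMonoid Γ]
    (a : Γ) (r : R) (g : HahnSeries Γ R) (x : Γ) :
    ((single a 1 - C r) * g).coeff x = g.coeff (x - a) - r * g.coeff x := by
  rw [sub_mul, coeff_sub, coeff_single_mul, one_mul, C_mul_eq_smul, coeff_smul, smul_eq_mul]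

theorem HahnSeries.sum_range_coeff_single_sub_C_mul_mul_pow [PartialOrder Γ]
    [IsOrderedAddMonoid Γ] (a : Γ) (r : R) (g : HahnSeries Γ R) (y : Γ) (m : ℕ) :
    ∑ n ∈ range m, ((single a 1 - C r) * g).coeff (y + n • a) * r ^ n =
      g.coeff (y - a) - g.coeff (y + m • a - a) * r ^ m := by
  let c : ℕ → R := fun n => g.coeff (y + n • a - a) * r ^ n
  have hterm (n : ℕ) : ((single a 1 - C r) * g).coeff (y + n • a) * r ^ n = c n - c (n + 1) := by
    simp only [c, coeff_single_sub_C_mul, succ_nsmul, ← add_assoc, add_sub_cancel_right, pow_succ]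
    ring
  rw [sum_congr rfl fun n _ => hterm n, sum_range_sub']
  simp [c]

theorem HahnSeries.coeff_eq_zero_of_coeff_sub_succ_nsmul_eq_mul [PartialOrder Γ]
    [IsOrderedAddMonoid Γ] {r : R} (hr : r ∈ nonZeroDivisors R) {a : Γ} (ha : 0 < a)
    {g : HahnSeries Γ R} {y : Γ}
    (h : ∀ k : ℕ, g.coeff (y - (k + 1) • a) = r * g.coeff (y - k • a)) : g.coeff y = 0 := by
  have hpow (k : ℕ) : g.coeff (y - k • a) = r ^ k * g.coeff y := by
    induction k with
    | zero => simp
    | succ k ih => rw [h, ih, pow_succ', mul_assoc]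
  obtain ⟨k, hk⟩ : ∃ k : ℕ, g.coeff (y - k • a) = 0 := by
    by_contra! hne
    exact Set.isWF_iff_no_descending_seq.1 g.isWF_support (fun k => y - k • a)
      (fun k l hkl => sub_lt_sub_left (nsmul_lt_nsmul_left ha hkl) y) hne
  rwa [hpow, mul_left_mem_nonZeroDivisors_eq_zero_iff (pow_mem hr k)] at hk

end SingleSubC

section NullSeries

variable {R : Type*} [CommRing R] {r : R}

theorem isNullSeries_single_sub_C_mul (hr : r ∈ nonZeroDivisors R) (g : HahnSeries ℚ R) :
    IsNullSeries r ((single 1 1 - C r) * g) := by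
  intro i N hf m
  have hbot : g.coeff (i - N - 1) = 0 := by
    refine coeff_eq_zero_of_coeff_sub_succ_nsmul_eq_mul hr one_pos fun k => ?_
    have hk := hf (-N - 1 - k) (by omega)
    rw [coeff_single_sub_C_mul, sub_eq_zero] at hk
    simp only [nsmul_one]
    convert hk using 2
    · push_cast
      ring
    · congr 1
      push_cast
      ring
  have hsum : ∑ n ∈ range (m + 1), ((single 1 1 - C r) * g).coeff (i + ((n - N : ℤ) : ℚ)) * r ^ n
      = ∑ n ∈ range (m + 1), ((single 1 1 - C r) * g).coeff (i - N + n • 1) * r ^ n :=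
    sum_congr rfl fun n _ => by
      congr 2
      rw [nsmul_one]
      push_cast
      ring
  rw [hsum, sum_range_coeff_single_sub_C_mul_mul_pow, hbot, zero_sub]
  exact neg_mem (Ideal.mem_span_singleton'.2 ⟨_, rfl⟩)

def tailPartialSum (r : R) (f : HahnSeries ℚ R) (x : ℚ) (m : ℕ) : R :=
  ∑ n ∈ range m, f.coeff (x + (n + 1)) * r ^ n

theorem tailPartialSum_sub_one_succ (f : HahnSeries ℚ R) (x : ℚ) (m : ℕ) :
    tailPartialSum r f (x - 1) (m + 1) = f.coeff x + r * tailPartialSum r f x m := by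
  rw [tailPartialSum, tailPartialSum, sum_range_succ', mul_sum, add_comm]
  congr 1
  · norm_num
  · refine sum_congr rfl fun n _ => ?_
    rw [show x - 1 + ((n + 1 : ℕ) + 1 : ℚ) = x + (n + 1) by push_cast; ring, pow_succ]
    ring

theorem tailPartialSum_mem_span_pow {f : HahnSeries ℚ R} (hf : IsNullSeries r f) {x : ℚ}
    (hx : ∀ k : ℕ, f.coeff (x - k) = 0) : ∀ m : ℕ, tailPartialSum r f x m ∈ Ideal.span {r ^ m}
  | 0 => by simp
  | m + 1 => by
    have hnull := hf (x + 1) 0 (fun n hn => by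
      obtain ⟨k, rfl⟩ : ∃ k : ℕ, n = -(k + 1) := ⟨(-(n + 1)).toNat, by omega⟩
      rw [← hx k]
      congr 1
      push_cast
      ring) m
    unfold tailPartialSum
    convert hnull using 4 with n
    push_cast
    ring

theorem mem_span_single_sub_C_of_isNullSeries
    (hcomplete : IsAdicComplete (Ideal.span {r}) R) {f : HahnSeries ℚ R}
    (hf : IsNullSeries r f) : f ∈ Ideal.span {single (1 : ℚ) (1 : R) - C r} := by
  choose g hg using fun x =>
    hcomplete.toIsPrecomplete.exists_sub_sum_range_mul_pow_mem fun n => f.coeff (x + (n + 1))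
  replace hg : ∀ x m, g x - tailPartialSum r f x m ∈ Ideal.span {r ^ m} := hg
  have hvanish (x : ℚ) (hx : ∀ k : ℕ, f.coeff (x - k) = 0) : g x = 0 :=
    hcomplete.eq_zero_of_forall_mem_span_pow fun m => by
      simpa only [sub_add_cancel] using add_mem (hg x m) (tailPartialSum_mem_span_pow hf hx m)
  have hsupp : Function.support g ⊆ f.support + Set.range ((↑) : ℕ → ℚ) := by
    intro x hx
    obtain ⟨k, hk⟩ : ∃ k : ℕ, f.coeff (x - k) ≠ 0 := by
      by_contra! h
      exact hx (hvanish x h)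
    exact ⟨x - k, hk, k, ⟨k, rfl⟩, sub_add_cancel x k⟩
  have hpwo : (Set.range ((↑) : ℕ → ℚ)).IsPWO := by
    simpa [Set.image_univ] using (Set.isPWO_of_wellQuasiOrderedLE Set.univ).image_of_monotone
      Nat.mono_cast
  have hrec (x : ℚ) : g (x - 1) - r * g x = f.coeff x := by
    refine sub_eq_zero.1 (hcomplete.eq_zero_of_forall_mem_span_pow fun m => ?_)
    have hprev : g (x - 1) - tailPartialSum r f (x - 1) (m + 1) ∈ Ideal.span {r ^ m} :=
      Ideal.span_singleton_le_span_singleton.2 (pow_dvd_pow r m.le_succ) (hg (x - 1) (m + 1))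
    convert sub_mem hprev (Ideal.mul_mem_left _ r (hg x m)) using 1
    rw [tailPartialSum_sub_one_succ]
    ring
  refine Ideal.mem_span_singleton'.2 ⟨⟨g, (f.isPWO_support.add hpwo).mono hsupp⟩, ?_⟩
  ext x
  rw [mul_comm, coeff_single_sub_C_mul]
  exact hrec x

end NullSeries

/-- For `r` a non-zero-divisor in an `r`-adically complete commutative ring `R`, the set of
null series in `HahnSeries ℚ R` is exactly the principal ideal generated by
`(single 1 1) - C r`. -/
theorem isNullSeries_iff_mem_span {R : Type*} [CommRing R] (r : R)
    (hr : r ∈ nonZeroDivisors R) (hcomplete : IsAdicComplete (Ideal.span {r}) R) :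
    {f : HahnSeries ℚ R | IsNullSeries r f} =
      ↑(Ideal.span {HahnSeries.single (1 : ℚ) (1 : R) - HahnSeries.C r} :
        Ideal (HahnSeries ℚ R)) := by
  ext f
  refine ⟨mem_span_single_sub_C_of_isNullSeries hcomplete, fun hf => ?_⟩
  obtain ⟨g, rfl⟩ := Ideal.mem_span_singleton'.1 hf
  rw [mul_comm]
  exact isNullSeries_single_sub_C_mul hr g

end
end

section
/- Let R be a commutative ring, let r ∈ R be a non-zero-divisor such that R is r-adically complete, and let s : R/(r) → R be a set-theoretic section of the quotient map R → R/(r) with s(0) = 0. Then every element of the quotient ring (HahnSeries ℚ R) / ((single 1 1) − C r) has a unique representative f ∈ HahnSeries ℚ R all of whose coefficients lie in the image of s: for every x in the quotient there exists a unique f ∈ HahnSeries ℚ R with f.coeff i ∈ Set.range s for all i ∈ ℚ and with class of f equal to x. -/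
/-!
Existence is long division by `T^γ - r` from the bottom up: at each exponent `i`, write the
coefficient of `g` plus the incoming carry as `s [a] + r * c` and pass `c` on to `i + γ`. Only
finitely many of the exponents `i - n • γ` lie in the well-founded support of `g`, so the carry
into `i` is determined after finitely many steps, and the digits and carries are supported in the
partially well-ordered set `supp g + ℕ • γ`.

For uniqueness, if `f₁ - f₂ = (T^γ - r) * a` with `a ≠ 0`, then at the order `i` of `a` the
difference has coefficient `-r * a_i ∈ (r)`. Two values of `s` that agree modulo `r` are equal,
so `r * a_i = 0` and hence `a_i = 0`, a contradiction.
-/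

noncomputable section

open Filter HahnSeries
open scoped Pointwise

theorem Set.IsWF.eventually_sub_nsmul_notMem {Γ : Type*} [AddCommGroup Γ] [PartialOrder Γ]
    [IsOrderedAddMonoid Γ] {A : Set Γ} (hA : A.IsWF) {γ : Γ} (hγ : 0 < γ) (i : Γ) :
    ∀ᶠ n : ℕ in atTop, i - n • γ ∉ A := by
  by_contra h
  obtain ⟨φ, hφ, hφA⟩ := extraction_of_frequently_atTop (not_eventually.1 h)
  refine Set.isWF_iff_no_descending_seq.1 hA (fun n => i - φ n • γ) ?_ (by simpa using hφA)
  exact fun m n hmn => sub_lt_sub_left (nsmul_lt_nsmul_left hγ (hφ hmn)) i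

theorem Set.isPWO_range_nsmul {Γ : Type*} [AddCommMonoid Γ] [PartialOrder Γ]
    [IsOrderedAddMonoid Γ] {γ : Γ} (hγ : 0 ≤ γ) : (Set.range fun n : ℕ => n • γ).IsPWO := by
  simpa only [Set.image_univ] using
    (Set.isPWO_of_wellQuasiOrderedLE Set.univ).image_of_monotone fun _ _ => nsmul_le_nsmul_left hγ

theorem Function.LeftInverse.injOn_range {α β : Type*} {f : α → β} {g : β → α}
    (h : Function.LeftInverse f g) : Set.InjOn f (Set.range g) := by
  rintro _ ⟨a, rfl⟩ _ ⟨b, rfl⟩ hab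
  rw [h a, h b] at hab
  rw [hab]

namespace HahnSeries

theorem coeff_single_one_sub_C_mul {Γ R : Type*} [AddCommGroup Γ] [PartialOrder Γ]
    [IsOrderedAddMonoid Γ] [CommRing R] (γ : Γ) (r : R) (x : HahnSeries Γ R) (i : Γ) :
    ((single γ 1 - C r) * x).coeff i = x.coeff (i - γ) - r * x.coeff i := by
  rw [sub_mul, coeff_sub, coeff_single_mul, one_mul, C_mul_eq_smul, coeff_smul, smul_eq_mul]

theorem mem_support_add_range_nsmul {Γ R : Type*} [AddCommGroup Γ] [PartialOrder Γ] [Zero R]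
    {x : HahnSeries Γ R} {γ i : Γ} {n : ℕ} (h : x.coeff (i - n • γ) ≠ 0) :
    i ∈ x.support + Set.range fun n : ℕ => n • γ :=
  ⟨i - n • γ, h, n • γ, ⟨n, rfl⟩, sub_add_cancel i _⟩

end HahnSeries

open Classical in
/-- `a / r` when `r ∣ a`, and the junk value `0` otherwise. -/
def divOrZero {R : Type*} [CommRing R] (r a : R) : R :=
  if h : r ∣ a then h.choose else 0

theorem mul_divOrZero {R : Type*} [CommRing R] {r a : R} (h : r ∣ a) :
    r * divOrZero r a = a := by
  rw [divOrZero, dif_pos h, ← h.choose_spec]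

theorem divOrZero_zero {R : Type*} [CommRing R] {r : R} (hr : r ∈ nonZeroDivisors R) :
    divOrZero r 0 = 0 :=
  (mul_left_mem_nonZeroDivisors_eq_zero_iff hr).1 (mul_divOrZero (dvd_zero r))

namespace HahnSeries.DigitExpansion

variable {Γ R : Type*} [AddCommGroup Γ] [PartialOrder Γ] [CommRing R]
  {r : R} (s : R ⧸ Ideal.span {r} → R)

/-- Writing `a = s [a] + r * c`, the carry `c` passed on to the next exponent. -/
def carryOut (a : R) : R :=
  divOrZero r (a - s (Ideal.Quotient.mk _ a))

/-- The carry arriving at exponent `i` when the expansion of `g` is started, with no incoming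
carry, at `i - k • γ`. -/
def carryIn (g : HahnSeries Γ R) (γ : Γ) : ℕ → Γ → R
  | 0, _ => 0
  | k + 1, i => carryOut s (g.coeff (i - γ) + carryIn g γ k (i - γ))

def carry (g : HahnSeries Γ R) (γ i : Γ) : R :=
  Classical.epsilon fun v => ∀ᶠ k in atTop, carryIn s g γ k i = v

variable {s}

theorem mul_carryOut (hs : ∀ a, Ideal.Quotient.mk (Ideal.span {r}) (s a) = a) (a : R) :
    r * carryOut s a = a - s (Ideal.Quotient.mk _ a) := by
  refine mul_divOrZero (Ideal.mem_span_singleton.1 ?_)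
  rw [← Ideal.Quotient.eq_zero_iff_mem, map_sub, hs, sub_self]

theorem carryOut_zero (hr : r ∈ nonZeroDivisors R) (hs0 : s 0 = 0) : carryOut s 0 = 0 := by
  rw [carryOut, map_zero, hs0, sub_zero, divOrZero_zero hr]

theorem carryIn_succ_of_coeff_eq_zero (hr : r ∈ nonZeroDivisors R) (hs0 : s 0 = 0)
    {g : HahnSeries Γ R} {γ : Γ} {k : ℕ} {i : Γ}
    (h : ∀ n ≥ k, g.coeff (i - (n + 1) • γ) = 0) :
    carryIn s g γ (k + 1) i = carryIn s g γ k i := by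
  induction k generalizing i with
  | zero =>
    have h₀ : g.coeff (i - γ) = 0 := by simpa using h 0 le_rfl
    simp only [carryIn, h₀, add_zero, carryOut_zero hr hs0]
  | succ k ih =>
    have hshift : ∀ n ≥ k, g.coeff (i - γ - (n + 1) • γ) = 0 := fun n hn => by
      simpa [succ_nsmul, sub_sub, add_comm γ] using h (n + 1) (by omega)
    rw [carryIn, ih hshift, carryIn]

theorem carryIn_eq_zero (hr : r ∈ nonZeroDivisors R) (hs0 : s 0 = 0)
    {g : HahnSeries Γ R} {γ i : Γ} (h : ∀ n : ℕ, g.coeff (i - (n + 1) • γ) = 0) (k : ℕ) :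
    carryIn s g γ k i = 0 := by
  induction k with
  | zero => rfl
  | succ k ih => rw [carryIn_succ_of_coeff_eq_zero hr hs0 fun n _ => h n, ih]

variable [IsOrderedAddMonoid Γ]

theorem eventually_carryIn_eq_carry (hr : r ∈ nonZeroDivisors R) (hs0 : s 0 = 0)
    (g : HahnSeries Γ R) {γ : Γ} (hγ : 0 < γ) (i : Γ) :
    ∀ᶠ k in atTop, carryIn s g γ k i = carry s g γ i := by
  refine Classical.epsilon_spec (p := fun v => ∀ᶠ k in atTop, carryIn s g γ k i = v) ?_
  obtain ⟨k₀, hk₀⟩ := eventually_atTop.1 (g.isWF_support.eventually_sub_nsmul_notMem hγ i)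
  refine ⟨carryIn s g γ k₀ i, eventually_atTop.2 ⟨k₀, fun k hk => ?_⟩⟩
  induction k, hk using Nat.le_induction with
  | base => rfl
  | succ k hk ih =>
    rw [carryIn_succ_of_coeff_eq_zero hr hs0 fun n hn => ?_, ih]
    simpa using hk₀ (n + 1) (by omega)

theorem carry_add (hr : r ∈ nonZeroDivisors R) (hs0 : s 0 = 0)
    (g : HahnSeries Γ R) {γ : Γ} (hγ : 0 < γ) (i : Γ) :
    carry s g γ (i + γ) = carryOut s (g.coeff i + carry s g γ i) := by
  have hnext :=
    (tendsto_add_atTop_nat 1).eventually (eventually_carryIn_eq_carry hr hs0 g hγ (i + γ))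
  obtain ⟨k, hk, hk'⟩ := (hnext.and (eventually_carryIn_eq_carry hr hs0 g hγ i)).exists
  rw [← hk, carryIn, add_sub_cancel_right, hk']

theorem exists_coeff_ne_zero_of_carry_ne_zero (hr : r ∈ nonZeroDivisors R) (hs0 : s 0 = 0)
    {g : HahnSeries Γ R} {γ : Γ} (hγ : 0 < γ) {i : Γ} (h : carry s g γ i ≠ 0) :
    ∃ n : ℕ, g.coeff (i - (n + 1) • γ) ≠ 0 := by
  by_contra! hg
  obtain ⟨k, hk⟩ := (eventually_carryIn_eq_carry hr hs0 g hγ i).exists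
  exact h (hk ▸ carryIn_eq_zero hr hs0 hg k)

theorem isPWO_support_digit (hr : r ∈ nonZeroDivisors R) (hs0 : s 0 = 0)
    (g : HahnSeries Γ R) {γ : Γ} (hγ : 0 < γ) :
    (Function.support fun i => s (Ideal.Quotient.mk _ (g.coeff i + carry s g γ i))).IsPWO := by
  refine (g.isPWO_support.add (Set.isPWO_range_nsmul hγ.le)).mono fun i hi => ?_
  by_cases hc : carry s g γ i = 0
  · have hg : i ∈ g.support := fun hg => hi (by simp [hg, hc, hs0])
    exact ⟨i, hg, 0, ⟨0, zero_nsmul γ⟩, add_zero i⟩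
  · obtain ⟨n, hn⟩ := exists_coeff_ne_zero_of_carry_ne_zero hr hs0 hγ hc
    exact mem_support_add_range_nsmul hn

theorem isPWO_support_carry_add (hr : r ∈ nonZeroDivisors R) (hs0 : s 0 = 0)
    (g : HahnSeries Γ R) {γ : Γ} (hγ : 0 < γ) :
    (Function.support fun i => carry s g γ (i + γ)).IsPWO := by
  refine (g.isPWO_support.add (Set.isPWO_range_nsmul hγ.le)).mono fun i hi => ?_
  obtain ⟨n, hn⟩ := exists_coeff_ne_zero_of_carry_ne_zero hr hs0 hγ hi
  rw [show i + γ - (n + 1) • γ = i - n • γ by rw [succ_nsmul]; abel] at hn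
  exact mem_support_add_range_nsmul hn

theorem exists_coeff_mem_range_dvd_sub (hr : r ∈ nonZeroDivisors R) (hs0 : s 0 = 0)
    (hs : ∀ a, Ideal.Quotient.mk (Ideal.span {r}) (s a) = a)
    (g : HahnSeries Γ R) {γ : Γ} (hγ : 0 < γ) :
    ∃ f : HahnSeries Γ R, (∀ i, f.coeff i ∈ Set.range s) ∧ single γ 1 - C r ∣ f - g := by
  refine ⟨⟨_, isPWO_support_digit hr hs0 g hγ⟩, fun i => ⟨_, rfl⟩,
    ⟨⟨_, isPWO_support_carry_add hr hs0 g hγ⟩, ?_⟩⟩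
  ext i
  rw [coeff_sub, coeff_single_one_sub_C_mul]
  change _ = carry s g γ (i - γ + γ) - r * carry s g γ (i + γ)
  rw [sub_add_cancel, carry_add hr hs0 g hγ, mul_carryOut hs]
  ring

end HahnSeries.DigitExpansion

namespace HahnSeries

theorem eq_of_coeff_mem_range_of_dvd_sub {Γ R : Type*} [AddCommGroup Γ] [LinearOrder Γ]
    [IsOrderedAddMonoid Γ] [CommRing R] {r : R} (hr : r ∈ nonZeroDivisors R)
    {s : R ⧸ Ideal.span {r} → R} (hs : ∀ a, Ideal.Quotient.mk (Ideal.span {r}) (s a) = a)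
    {γ : Γ} (hγ : 0 < γ) {f₁ f₂ : HahnSeries Γ R} (h₁ : ∀ i, f₁.coeff i ∈ Set.range s)
    (h₂ : ∀ i, f₂.coeff i ∈ Set.range s) (hdvd : single γ 1 - C r ∣ f₁ - f₂) : f₁ = f₂ := by
  obtain ⟨a, ha⟩ := hdvd
  suffices a = 0 by rw [← sub_eq_zero, ha, this, mul_zero]
  by_contra ha₀
  have hcoeff : (f₁ - f₂).coeff a.order = -(r * a.coeff a.order) := by
    rw [ha, coeff_single_one_sub_C_mul, coeff_eq_zero_of_lt_order (sub_lt_self _ hγ), zero_sub]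
  have hmk : Ideal.Quotient.mk (Ideal.span {r}) (f₁.coeff a.order)
      = Ideal.Quotient.mk _ (f₂.coeff a.order) := by
    rw [← sub_eq_zero, ← map_sub, ← coeff_sub, hcoeff, Ideal.Quotient.eq_zero_iff_mem]
    exact neg_mem (Ideal.mul_mem_right _ _ (Ideal.mem_span_singleton_self r))
  have heq := Function.LeftInverse.injOn_range hs (h₁ _) (h₂ _) hmk
  rw [← sub_eq_zero, ← coeff_sub, hcoeff, neg_eq_zero,
    mul_left_mem_nonZeroDivisors_eq_zero_iff hr, coeff_order_eq_zero] at heq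
  exact ha₀ heq

end HahnSeries

theorem exists_unique_representative_with_coeffs_in_section_general {R : Type*} [CommRing R] (r : R)
    (hr : r ∈ nonZeroDivisors R)
    (s : R ⧸ Ideal.span {r} → R)
    (hs0 : s 0 = 0)
    (hs : ∀ a : R ⧸ Ideal.span {r}, Ideal.Quotient.mk (Ideal.span {r}) (s a) = a)
    (x : HahnSeries ℚ R ⧸
      Ideal.span {HahnSeries.single (1 : ℚ) (1 : R) - HahnSeries.C r}) :
    ∃! f : HahnSeries ℚ R,
      (∀ i : ℚ, f.coeff i ∈ Set.range s) ∧
      Ideal.Quotient.mk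
        (Ideal.span {HahnSeries.single (1 : ℚ) (1 : R) - HahnSeries.C r}) f = x := by
  obtain ⟨g, rfl⟩ := Ideal.Quotient.mk_surjective x
  obtain ⟨f, hf, hfg⟩ := DigitExpansion.exists_coeff_mem_range_dvd_sub hr hs0 hs g one_pos
  have hf_class := Ideal.Quotient.eq.2 (Ideal.mem_span_singleton.2 hfg)
  refine ⟨f, ⟨hf, hf_class⟩, fun f' ⟨hf', hf'g⟩ => ?_⟩
  exact eq_of_coeff_mem_range_of_dvd_sub hr hs one_pos hf' hf
    (Ideal.mem_span_singleton.1 (Ideal.Quotient.eq.1 (hf'g.trans hf_class.symm)))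

/-- Let `r` be a non-zero-divisor in an `r`-adically complete commutative ring `R`, and let
`s : R/(r) → R` be a set-theoretic section of the quotient map with `s 0 = 0`. Then every
element of `(HahnSeries ℚ R) / ((single 1 1) - C r)` has a unique representative Hahn series
all of whose coefficients lie in the image of `s`. -/
theorem exists_unique_representative_with_coeffs_in_section {R : Type*} [CommRing R] (r : R)
    (hr : r ∈ nonZeroDivisors R) (hcomplete : IsAdicComplete (Ideal.span {r}) R)
    (s : R ⧸ Ideal.span {r} → R)
    (hs0 : s 0 = 0)
    (hs : ∀ a : R ⧸ Ideal.span {r}, Ideal.Quotient.mk (Ideal.span {r}) (s a) = a)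
    (x : HahnSeries ℚ R ⧸
      Ideal.span {HahnSeries.single (1 : ℚ) (1 : R) - HahnSeries.C r}) :
    ∃! f : HahnSeries ℚ R,
      (∀ i : ℚ, f.coeff i ∈ Set.range s) ∧
      Ideal.Quotient.mk
        (Ideal.span {HahnSeries.single (1 : ℚ) (1 : R) - HahnSeries.C r}) f = x :=
  exists_unique_representative_with_coeffs_in_section_general r hr s hs0 hs x

end
end

section
/- Let p be a prime and let E be a perfect field of characteristic p. Then the quotient ring (HahnSeries ℚ (WittVector p E)) / (T − p), where T is the Hahn series single 1 1 and the quotient is by the ideal generated by T − p, is a field. -/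
/-!
Modulo `T - p` a coefficient `a` at `T ^ z` may be traded for its Teichmüller digit `[a₀]` at
`T ^ z` together with the carry `(a - [a₀]) / p` moved to `T ^ (z + 1)`. Performing all these
carries at once (the carry into `z` only involves the finitely many exponents `z - m`, `m : ℕ`,
above the order of `f`, so the recursion terminates) turns any Hahn series `f` into a congruent
series `g` all of whose coefficients are Teichmüller representatives. Over a perfect field a
nonzero such `g` has a unit leading coefficient, hence is a unit, while `T - p` has leading
coefficient `-p` and is not. So every nonzero class of the quotient is invertible.
-/

noncomputable section

theorem Ideal.Quotient.isField_of_forall_exists_isUnit {R : Type*} [CommRing R] {I : Ideal R}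
    (hI : I ≠ ⊤) (h : ∀ r ∉ I, ∃ u, IsUnit u ∧ r - u ∈ I) : IsField (R ⧸ I) := by
  have := Ideal.Quotient.nontrivial_iff.mpr hI
  refine ⟨exists_pair_ne _, mul_comm, fun {a} ha => ?_⟩
  obtain ⟨r, rfl⟩ := Ideal.Quotient.mk_surjective a
  obtain ⟨u, hu, hru⟩ := h r (mt Ideal.Quotient.eq_zero_iff_mem.mpr ha)
  rw [Ideal.Quotient.mk_eq_mk_iff_sub_mem _ _ |>.mpr hru]
  exact (hu.map _).exists_right_inv

theorem Set.isPWO_range_natCast : (Set.range ((↑) : ℕ → ℚ)).IsPWO := by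
  simpa using (Set.IsPWO.of_linearOrder (Set.univ : Set ℕ)).image_of_monotone Nat.mono_cast

namespace HahnSeries

section Units

variable {Γ A : Type*} [AddCommGroup Γ] [LinearOrder Γ] [IsOrderedAddMonoid Γ]
  [CommRing A] [IsDomain A]

theorem isUnit_of_forall_coeff_ne_zero {g : HahnSeries Γ A} (hg : g ≠ 0)
    (h : ∀ z, g.coeff z ≠ 0 → IsUnit (g.coeff z)) : IsUnit g := by
  have hlead := leadingCoeff_ne_zero.mpr hg
  rw [leadingCoeff_eq] at hlead
  rw [isUnit_iff, leadingCoeff_eq]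
  exact h _ hlead

theorem not_isUnit_single_sub_C {γ : Γ} (hγ : 0 < γ) {π : A} (hπ0 : π ≠ 0)
    (hπ : ¬IsUnit π) : ¬IsUnit (single γ (1 : A) - C π) := by
  have hlt : (C (-π) : HahnSeries Γ A).orderTop < (single γ (1 : A)).orderTop := by
    rw [C_apply, orderTop_single (neg_ne_zero.mpr hπ0), orderTop_single one_ne_zero]
    exact_mod_cast hγ
  rw [isUnit_iff, sub_eq_neg_add, ← map_neg, leadingCoeff_add_eq_left hlt, C_apply,
    leadingCoeff_of_single, IsUnit.neg_iff]
  exact hπ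

end Units

section Carry

open Pointwise

variable {A : Type*} [CommRing A] (t : ZeroHom A A) (f : HahnSeries ℚ A)

/-- `carryApprox t f n z` is the value at `z` after carrying `t` through the `n` exponents
`z - n + 1, …, z`, starting from `0` at `z - n`. -/
def carryApprox : ℕ → ℚ → A
  | 0, _ => 0
  | n + 1, z => f.coeff z + t (carryApprox n (z - 1))

theorem carryApprox_eq_of_coeff_eq_zero {k n : ℕ} {z : ℚ}
    (h : ∀ m : ℕ, n ≤ m → f.coeff (z - m) = 0) (hk : n ≤ k) :
    carryApprox t f k z = carryApprox t f n z := by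
  induction k generalizing n z with
  | zero => rw [Nat.le_zero.mp hk]
  | succ k ih =>
    have h' : ∀ m : ℕ, n - 1 ≤ m → f.coeff (z - 1 - m) = 0 := fun m hm => by
      simpa [sub_sub, add_comm] using h (m + 1) (by omega)
    rw [carryApprox, ih h' (by omega)]
    rcases n with _ | n
    · simpa [carryApprox] using h 0 le_rfl
    · rfl

def carryBound (z : ℚ) : ℕ := ⌊z - f.order⌋₊ + 1

theorem coeff_sub_natCast_eq_zero {z : ℚ} {m : ℕ} (hm : carryBound f z ≤ m) :
    f.coeff (z - m) = 0 := by
  rcases eq_or_ne f 0 with rfl | hf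
  · rfl
  apply coeff_eq_zero_of_lt_order
  have hfloor := Nat.lt_floor_add_one (z - f.order)
  have hm' : (carryBound f z : ℚ) ≤ m := by exact_mod_cast hm
  rw [carryBound, Nat.cast_add, Nat.cast_one] at hm'
  linarith

def carry (z : ℚ) : A := carryApprox t f (carryBound f z) z

theorem carry_eq_carryApprox {n : ℕ} {z : ℚ} (h : ∀ m : ℕ, n ≤ m → f.coeff (z - m) = 0) :
    carry t f z = carryApprox t f n z := by
  rw [carry, ← carryApprox_eq_of_coeff_eq_zero t f (fun m hm => coeff_sub_natCast_eq_zero f hm)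
    (le_max_right n _), carryApprox_eq_of_coeff_eq_zero t f h (le_max_left n _)]

theorem carry_eq (z : ℚ) : carry t f z = f.coeff z + t (carry t f (z - 1)) := by
  rw [carry_eq_carryApprox t f (n := carryBound f (z - 1) + 1), carryApprox, carry]
  intro m hm
  obtain ⟨m, rfl⟩ : ∃ k, m = k + 1 := ⟨m - 1, by omega⟩
  simpa [sub_sub, add_comm] using coeff_sub_natCast_eq_zero f (z := z - 1) (m := m) (by omega)

theorem support_carry_subset :
    Function.support (carry t f) ⊆ f.support + Set.range ((↑) : ℕ → ℚ) := by
  intro z hz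
  by_contra hmem
  refine hz (carry_eq_carryApprox t f (n := 0) fun m _ => ?_)
  by_contra hm
  exact hmem ⟨z - m, hm, m, ⟨m, rfl⟩, sub_add_cancel z m⟩

def carrySeries : HahnSeries ℚ A where
  coeff z := t (carry t f z)
  isPWO_support' := (f.isPWO_support.add Set.isPWO_range_natCast).mono <|
    (Function.support_comp_subset t.map_zero _).trans (support_carry_subset t f)

@[simp]
theorem coeff_carrySeries (z : ℚ) : (carrySeries t f).coeff z = t (carry t f z) := rfl

theorem coeff_sub_mul_carrySeries (π : A) (z : ℚ) :
    (f - (C π - single (1 : ℚ) 1) * carrySeries t f).coeff z =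
      carry t f z - π * t (carry t f z) := by
  simp only [coeff_sub, sub_mul, C_mul_eq_smul, coeff_smul, coeff_single_mul, one_mul, smul_eq_mul,
    coeff_carrySeries]
  linear_combination (-1 : A) * carry_eq t f z

end Carry

end HahnSeries

namespace WittVector

variable {p : ℕ} [Fact p.Prime] {R : Type*} [CommRing R] [CharP R p] [PerfectRing R p]

local notation "𝕎" => WittVector p

theorem p_dvd_sub_teichmuller_coeff_zero (x : 𝕎 R) :
    (p : 𝕎 R) ∣ x - teichmuller p (x.coeff 0) := by
  rw [← Ideal.mem_span_singleton, mem_span_p_iff_coeff_zero_eq_zero, ← constantCoeff_apply,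
    map_sub, constantCoeff_apply, constantCoeff_apply, teichmuller_coeff_zero, sub_self]

variable [IsDomain R]

/-- `x ↦ (x - [x₀]) / p` -/
def teichmullerTail : ZeroHom (𝕎 R) (𝕎 R) where
  toFun x := (p_dvd_sub_teichmuller_coeff_zero x).choose
  map_zero' := (mul_eq_zero.mp ((p_dvd_sub_teichmuller_coeff_zero (0 : 𝕎 R)).choose_spec
    |>.symm.trans (by simp))).resolve_left (p_nonzero p R)

theorem sub_p_mul_teichmullerTail (x : 𝕎 R) :
    x - p * teichmullerTail x = teichmuller p (x.coeff 0) := by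
  change x - p * (p_dvd_sub_teichmuller_coeff_zero x).choose = _
  rw [← (p_dvd_sub_teichmuller_coeff_zero x).choose_spec, sub_sub_cancel]

theorem exists_sub_mem_span_and_coeff_mem_range_teichmuller (f : HahnSeries ℚ (𝕎 R)) :
    ∃ g, f - g ∈ Ideal.span {HahnSeries.single (1 : ℚ) (1 : 𝕎 R) - (p : HahnSeries ℚ (𝕎 R))} ∧
      ∀ z, g.coeff z ∈ Set.range (teichmuller p) := by
  refine ⟨f - (HahnSeries.C (p : 𝕎 R) - HahnSeries.single 1 1) *
    HahnSeries.carrySeries teichmullerTail f, ?_,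
    fun z => ⟨(HahnSeries.carry teichmullerTail f z).coeff 0, ?_⟩⟩
  · rw [sub_sub_cancel, Ideal.mem_span_singleton, map_natCast]
    exact ⟨-HahnSeries.carrySeries teichmullerTail f, by ring⟩
  · rw [HahnSeries.coeff_sub_mul_carrySeries, sub_p_mul_teichmullerTail]

end WittVector

/-- Let `p` be a prime and `E` a perfect field of characteristic `p`. Then the ring of
Hahn-Witt series `HW(E) = (HahnSeries ℚ (WittVector p E)) / (T - p)`, where `T = single 1 1`,
is a field. -/
theorem hahnWitt_isField (p : ℕ) [Fact p.Prime] (E : Type*) [Field E] [CharP E p]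
    [PerfectRing E p] :
    IsField (HahnSeries ℚ (WittVector p E) ⧸
      Ideal.span {HahnSeries.single (1 : ℚ) (1 : WittVector p E) -
        (p : HahnSeries ℚ (WittVector p E))}) := by
  have hT : ¬IsUnit (HahnSeries.single (1 : ℚ) (1 : WittVector p E) -
      (p : HahnSeries ℚ (WittVector p E))) := by
    rw [← map_natCast HahnSeries.C]
    exact HahnSeries.not_isUnit_single_sub_C one_pos (WittVector.p_nonzero p E)
      (WittVector.irreducible p).not_isUnit
  refine Ideal.Quotient.isField_of_forall_exists_isUnit
    (by rwa [Ne, Ideal.span_singleton_eq_top]) fun f hf => ?_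
  obtain ⟨g, hfg, hg⟩ := WittVector.exists_sub_mem_span_and_coeff_mem_range_teichmuller f
  have hg0 : g ≠ 0 := by
    rintro rfl
    exact hf (by simpa using hfg)
  refine ⟨g, HahnSeries.isUnit_of_forall_coeff_ne_zero hg0 fun z hz => ?_, hfg⟩
  obtain ⟨x, hx⟩ := hg z
  rw [← hx] at hz ⊢
  exact (IsUnit.mk0 x fun hx0 => hz (by rw [hx0, WittVector.teichmuller_zero])).map _
end
end

section
/- Let E be a perfect field of characteristic p, let F = HahnSeries ℚ E with its canonical additive valuation v : F → WithTop ℚ given by v(f) = the least element of the support of f (and v(0) = ⊤). Then F is maximally complete: for any field F' equipped with an additive valuation w : F' → WithTop ℚ satisfying w(x) = ⊤ only for x = 0, and any ring homomorphism ι : F → F' such that (i) w(ι f) = v(f) for all f ∈ F, and (ii) for every x ∈ F' with w(x) ≥ 0 there exists a ∈ E with w(x − ι(single 0 a)) > 0 (same residue field), the map ι is surjective. (Note that the value group condition is automatic since v is already surjective onto ℚ ∪ {⊤}.) -/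
noncomputable section

/-!
A Hahn series is determined coefficient by coefficient: if `x` is approximated by `ι f` to
valuation `> δ`, the coefficient of `f` at `δ` does not depend on the choice of `f`. Reading off
these coefficients gives a function whose support is well-ordered (below each point it agrees with
the support of a single approximation), hence a Hahn series `g` that approximates `x` as well as
any `ι f` does. If `x ≠ ι g`, say `v (x - ι g) = γ`, the residue field hypothesis applied to
`(x - ι g) / ι (T ^ γ)` improves the approximation by a monomial `a T ^ γ`, a contradiction.
-/

namespace HahnSeries

variable {Γ E K : Type*} [LinearOrder Γ] [AddCommGroup Γ] [IsOrderedAddMonoid Γ]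
  [Ring E] [Field K] {v : AddValuation K (WithTop Γ)} {ι : HahnSeries Γ E →+* K}

theorem coeff_eq_of_lt_valuation_sub (h_val : ∀ f, v (ι f) = f.orderTop) {x : K}
    {f g : HahnSeries Γ E} {δ : Γ} (hf : (δ : WithTop Γ) < v (x - ι f))
    (hg : (δ : WithTop Γ) < v (x - ι g)) : f.coeff δ = g.coeff δ := by
  have hfg : (δ : WithTop Γ) < (f - g).orderTop := by
    rw [← h_val, map_sub, show ι f - ι g = (x - ι g) - (x - ι f) by ring]
    exact (lt_min hg hf).trans_le (v.map_sub _ _)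
  rw [← sub_eq_zero, ← coeff_sub]
  exact coeff_eq_zero_of_lt_orderTop hfg

variable (v ι) in
open Classical in
/-- The coefficient at `δ` of any `f` with `δ < v (x - ι f)` (independent of `f` by
`coeff_eq_of_lt_valuation_sub`), and `0` if there is none. -/
def approxCoeff (x : K) (δ : Γ) : E :=
  if h : ∃ f : HahnSeries Γ E, (δ : WithTop Γ) < v (x - ι f) then h.choose.coeff δ else 0

theorem approxCoeff_eq (h_val : ∀ f, v (ι f) = f.orderTop) {x : K} {f : HahnSeries Γ E} {δ : Γ}
    (hf : (δ : WithTop Γ) < v (x - ι f)) : approxCoeff v ι x δ = f.coeff δ := by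
  have h : ∃ f : HahnSeries Γ E, (δ : WithTop Γ) < v (x - ι f) := ⟨f, hf⟩
  rw [approxCoeff, dif_pos h]
  exact coeff_eq_of_lt_valuation_sub h_val h.choose_spec hf

theorem isPWO_support_approxCoeff (h_val : ∀ f, v (ι f) = f.orderTop) (x : K) :
    (Function.support (approxCoeff v ι x)).IsPWO := by
  refine (Set.isWF_iff_no_descending_seq.mpr fun s hs hsupp => ?_).isPWO
  obtain ⟨f, hf⟩ : ∃ f : HahnSeries Γ E, (s 0 : WithTop Γ) < v (x - ι f) := by
    by_contra h
    exact hsupp 0 (dif_neg h)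
  have hsub : ∀ n, s n ∈ f.support := fun n => by
    have hn : (s n : WithTop Γ) < v (x - ι f) :=
      (WithTop.coe_le_coe.mpr (hs.antitone n.zero_le)).trans_lt hf
    simpa [← approxCoeff_eq h_val hn] using hsupp n
  exact Set.isWF_iff_no_descending_seq.mp f.isWF_support s hs hsub

def approxLimit (h_val : ∀ f, v (ι f) = f.orderTop) (x : K) : HahnSeries Γ E :=
  ⟨approxCoeff v ι x, isPWO_support_approxCoeff h_val x⟩

theorem lt_valuation_sub_approxLimit (h_val : ∀ f, v (ι f) = f.orderTop) {x : K}
    {f : HahnSeries Γ E} {γ : Γ} (hf : (γ : WithTop Γ) < v (x - ι f)) :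
    (γ : WithTop Γ) < v (x - ι (approxLimit h_val x)) := by
  set g := approxLimit h_val x
  have hcoeff : ∀ δ ≤ γ, (f - g).coeff δ = 0 := fun δ hδ => by
    rw [coeff_sub, sub_eq_zero]
    exact (approxCoeff_eq h_val ((WithTop.coe_le_coe.mpr hδ).trans_lt hf)).symm
  have hfg : (γ : WithTop Γ) < (f - g).orderTop := by
    by_contra! hle
    obtain ⟨δ, hδ⟩ := WithTop.ne_top_iff_exists.mp (hle.trans_lt (WithTop.coe_lt_top γ)).ne
    exact coeff_orderTop_ne hδ.symm (hcoeff δ (WithTop.coe_le_coe.mp (hδ ▸ hle)))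
  rw [← h_val, map_sub] at hfg
  rw [show x - ι g = (x - ι f) + (ι f - ι g) by ring]
  exact (lt_min hf hfg).trans_le (v.map_add _ _)

theorem exists_lt_valuation_sub_single [Nontrivial E] (h_val : ∀ f, v (ι f) = f.orderTop)
    (h_res : ∀ x, 0 ≤ v x → ∃ a : E, 0 < v (x - ι (single 0 a))) {x : K} {γ : Γ}
    (hx : v x = γ) : ∃ a : E, (γ : WithTop Γ) < v (x - ι (single γ a)) := by
  set u := ι (single γ 1)
  have hu : v u = γ := by rw [h_val, orderTop_single one_ne_zero]
  have hu0 : u ≠ 0 := (v.ne_top_iff).mp (hu ▸ WithTop.coe_ne_top)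
  obtain ⟨a, ha⟩ := h_res (x * u⁻¹) (by rw [v.map_mul, v.map_inv, hx, hu]; simp)
  refine ⟨a, ?_⟩
  have hfactor : x - ι (single γ a) = (x * u⁻¹ - ι (single 0 a)) * u := by
    rw [sub_mul, inv_mul_cancel_right₀ hu0, ← map_mul, single_mul_single, zero_add, mul_one]
  rw [hfactor, v.map_mul, hu]
  simpa using WithTop.add_lt_add_right WithTop.coe_ne_top ha

theorem surjective_of_valuation_eq_orderTop [Nontrivial E] (h_val : ∀ f, v (ι f) = f.orderTop)
    (h_res : ∀ x, 0 ≤ v x → ∃ a : E, 0 < v (x - ι (single 0 a))) : Function.Surjective ι := by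
  intro x
  refine ⟨approxLimit h_val x, (sub_eq_zero.mp (v.top_iff.mp ?_)).symm⟩
  by_contra hne
  obtain ⟨γ, hγ⟩ := WithTop.ne_top_iff_exists.mp hne
  obtain ⟨a, ha⟩ := exists_lt_valuation_sub_single h_val h_res hγ.symm
  rw [sub_sub, ← map_add] at ha
  exact (lt_valuation_sub_approxLimit h_val ha).ne hγ

end HahnSeries

theorem hahnSeries_maximally_complete_general (E : Type*) [Field E]
    (F' : Type*) [Field F'] (w : F' → WithTop ℚ)
    (hw_mul : ∀ x y : F', w (x * y) = w x + w y)
    (hw_add : ∀ x y : F', min (w x) (w y) ≤ w (x + y))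
    (ι : HahnSeries ℚ E →+* F')
    (h_val : ∀ f : HahnSeries ℚ E, w (ι f) = f.orderTop)
    (h_res : ∀ x : F', 0 ≤ w x →
      ∃ a : E, 0 < w (x - ι (HahnSeries.single (0 : ℚ) a))) :
    Function.Surjective ι := by
  have hw_zero : w 0 = ⊤ := by simpa using h_val 0
  have hw_one : w 1 = 0 := by simpa using h_val 1
  exact HahnSeries.surjective_of_valuation_eq_orderTop
    (v := AddValuation.of w hw_zero hw_one hw_add hw_mul) h_val h_res

/-- Let `E` be a perfect field of characteristic `p`, and let `F = HahnSeries ℚ E` with its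
canonical additive valuation `v f = f.orderTop` (the least element of the support, `⊤` for `0`).
Then `F` is maximally complete: for any field `F'` with an additive valuation
`w : F' → WithTop ℚ` (with `w x = ⊤` only for `x = 0`) and any ring homomorphism `ι : F → F'`
preserving the valuation and inducing a surjection on residue fields, `ι` is surjective. -/
theorem hahnSeries_maximally_complete (p : ℕ) [Fact p.Prime] (E : Type*) [Field E] [CharP E p]
    [PerfectRing E p]
    (F' : Type*) [Field F'] (w : F' → WithTop ℚ)
    (hw_top : ∀ x : F', w x = ⊤ → x = 0)
    (hw_mul : ∀ x y : F', w (x * y) = w x + w y)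
    (hw_add : ∀ x y : F', min (w x) (w y) ≤ w (x + y))
    (ι : HahnSeries ℚ E →+* F')
    (h_val : ∀ f : HahnSeries ℚ E, w (ι f) = f.orderTop)
    (h_res : ∀ x : F', 0 ≤ w x →
      ∃ a : E, 0 < w (x - ι (HahnSeries.single (0 : ℚ) a))) :
    Function.Surjective ι :=
  hahnSeries_maximally_complete_general E F' w hw_mul hw_add ι h_val h_res

end
end

section
/- Let E be an algebraically closed field of characteristic p. Then the field HahnSeries ℚ E of Hahn series over E with exponents in ℚ is algebraically closed. -/
/-!
Newton's method, run transfinitely. For a polynomial `g` over Hahn series with `g(0) ≠ 0`, the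
first edge of its Newton polygon has a slope `-γ`; a root `c ≠ 0` of the residual polynomial of
that edge (it exists because the residue field is algebraically closed) gives a term `c t^γ`
such that `v(g(c t^γ + e)) > v(g(0))` whenever `v(e) > γ`. Replacing `x` by `x + c t^γ` therefore
raises `v(f(x))`, and this forces the next slope to be strictly larger. So if `f` had no root,
the series built from such steps would have strictly increasing exponents; the union of a chain
of them under truncation is again one, and a maximal one (Zorn) could still be extended by one
more step.
-/

open Polynomial

namespace HahnSeries

section OrderTop

variable {Γ R : Type*} [LinearOrder Γ]

theorem coe_lt_orderTop_iff_forall [Zero R] {x : HahnSeries Γ R} {g : Γ} :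
    (g : WithTop Γ) < x.orderTop ↔ ∀ j ≤ g, x.coeff j = 0 where
  mp h _ hj := coeff_eq_zero_of_lt_orderTop ((WithTop.coe_le_coe.2 hj).trans_lt h)
  mpr h := lt_of_le_of_ne
    (le_orderTop_iff_forall.2 fun j hj => h j (WithTop.coe_lt_coe.1 hj).le)
    (orderTop_ne_of_coeff_eq_zero (h g le_rfl)).symm

theorem le_orderTop_sum [AddCommMonoid R] {ι : Type*} {s : Finset ι} {x : ι → HahnSeries Γ R}
    {g : WithTop Γ} (h : ∀ i ∈ s, g ≤ (x i).orderTop) : g ≤ (∑ i ∈ s, x i).orderTop :=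
  le_orderTop_iff_forall.2 fun j hj => by
    rw [coeff_sum]
    exact Finset.sum_eq_zero fun i hi => coeff_eq_zero_of_lt_orderTop (hj.trans_le (h i hi))

theorem coe_lt_orderTop_sum [AddCommMonoid R] {ι : Type*} {s : Finset ι}
    {x : ι → HahnSeries Γ R} {g : Γ} (h : ∀ i ∈ s, (g : WithTop Γ) < (x i).orderTop) :
    (g : WithTop Γ) < (∑ i ∈ s, x i).orderTop :=
  coe_lt_orderTop_iff_forall.2 fun j hj => by
    rw [coeff_sum]
    exact Finset.sum_eq_zero fun i hi => coe_lt_orderTop_iff_forall.1 (h i hi) j hj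

variable [AddCommMonoid Γ] [IsOrderedCancelAddMonoid Γ] [CommRing R]

theorem le_orderTop_eval {g : (HahnSeries Γ R)[X]} {x : HahnSeries Γ R} {w : WithTop Γ}
    (h : ∀ i, w ≤ (g.coeff i).orderTop + i • x.orderTop) : w ≤ (g.eval x).orderTop := by
  rw [eval_eq_sum_range]
  refine le_orderTop_sum fun i _ => (h i).trans ?_
  calc _ ≤ (g.coeff i).orderTop + (x ^ i).orderTop := by
        gcongr; exact orderTop_nsmul_le_orderTop_pow
    _ ≤ _ := orderTop_add_le_mul

theorem coe_nsmul_lt_orderTop_pow_sub_pow {x y : HahnSeries Γ R} {γ : Γ}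
    (hy : γ ≤ y.orderTop) (hxy : γ < (x - y).orderTop) (n : ℕ) :
    ((n • γ : Γ) : WithTop Γ) < (x ^ n - y ^ n).orderTop := by
  have hx : (γ : WithTop Γ) ≤ x.orderTop := by
    simpa using (le_min hy hxy.le).trans (min_orderTop_le_orderTop_add (x := y) (y := x - y))
  induction n with
  | zero => simp
  | succ n ih =>
    have hsplit : x ^ (n + 1) - y ^ (n + 1) = (x ^ n - y ^ n) * y + x ^ n * (x - y) := by ring
    rw [hsplit, succ_nsmul, WithTop.coe_add]
    refine (lt_min ?_ ?_).trans_le min_orderTop_le_orderTop_add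
    · exact (WithTop.add_lt_add_of_lt_of_le WithTop.coe_ne_top ih hy).trans_le
        orderTop_add_le_mul
    · refine (WithTop.add_lt_add_of_le_of_lt WithTop.coe_ne_top ?_ hxy).trans_le
        orderTop_add_le_mul
      rw [WithTop.coe_nsmul]
      exact (nsmul_le_nsmul_right hx n).trans orderTop_nsmul_le_orderTop_pow

end OrderTop

section Newton

variable {Γ R : Type*} [AddCommGroup Γ] [LinearOrder Γ] [IsOrderedAddMonoid Γ] [CommRing R]

/-- `(g.eval (single γ c)).coeff q = (residualPoly g γ q).eval c`; for `q = v(g(0))` and `γ` a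
Newton slope this is the residual polynomial of the first edge of the Newton polygon. -/
noncomputable def residualPoly (g : (HahnSeries Γ R)[X]) (γ q : Γ) : R[X] :=
  ∑ i ∈ Finset.range (g.natDegree + 1), Polynomial.C ((g.coeff i).coeff (q - i • γ)) * X ^ i

theorem coeff_residualPoly (g : (HahnSeries Γ R)[X]) (γ q : Γ) (i : ℕ) :
    (residualPoly g γ q).coeff i = (g.coeff i).coeff (q - i • γ) := by
  simp only [residualPoly, finsetSum_coeff, coeff_C_mul_X_pow, Finset.sum_ite_eq,
    Finset.mem_range]
  split_ifs with hi
  · rfl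
  · rw [coeff_eq_zero_of_natDegree_lt (by omega), coeff_zero]

theorem coeff_eval_single (g : (HahnSeries Γ R)[X]) (γ q : Γ) (c : R) :
    (g.eval (single γ c)).coeff q = (residualPoly g γ q).eval c := by
  rw [eval_eq_sum_range, coeff_sum, residualPoly, eval_finsetSum]
  refine Finset.sum_congr rfl fun i _ => ?_
  conv_lhs => rw [single_pow, ← sub_add_cancel q (i • γ), coeff_mul_single_add]
  simp

/-- The line of slope `-γ` through `(0, v(g₀))` lies below all points `(i, v(gᵢ))` and meets a
second one: `-γ` is the slope of the first edge of the Newton polygon of `g`. -/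
def IsNewtonSlope (g : (HahnSeries Γ R)[X]) (γ : Γ) : Prop :=
  (∀ i : ℕ, (g.coeff 0).orderTop ≤ (g.coeff i).orderTop + i • (γ : WithTop Γ)) ∧
    ∃ i, 0 < i ∧ g.coeff i ≠ 0 ∧
      (g.coeff 0).orderTop = (g.coeff i).orderTop + i • (γ : WithTop Γ)

theorem IsNewtonSlope.orderTop_lt_orderTop_eval_single_add {g : (HahnSeries Γ R)[X]} {γ : Γ}
    {c : R} {e : HahnSeries Γ R} (hγ : IsNewtonSlope g γ) (h0 : g.coeff 0 ≠ 0)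
    (hc : (residualPoly g γ (g.coeff 0).order).IsRoot c) (he : (γ : WithTop Γ) < e.orderTop) :
    (g.coeff 0).orderTop < (g.eval (single γ c + e)).orderTop := by
  have hle := hγ.1
  rw [← order_eq_orderTop_of_ne_zero h0] at hle ⊢
  set v := (g.coeff 0).order
  have hs : (γ : WithTop Γ) ≤ (single γ c).orderTop := orderTop_single_le
  have h_single : (v : WithTop Γ) < (g.eval (single γ c)).orderTop := by
    refine lt_of_le_of_ne (le_orderTop_eval fun i => (hle i).trans ?_) ?_
    · gcongr
    · exact (orderTop_ne_of_coeff_eq_zero (by rwa [coeff_eval_single])).symm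
  have h_diff : (v : WithTop Γ) < (g.eval (single γ c + e) - g.eval (single γ c)).orderTop := by
    rw [eval_eq_sum_range, eval_eq_sum_range, ← Finset.sum_sub_distrib]
    refine coe_lt_orderTop_sum fun i _ => ?_
    rw [← mul_sub]
    by_cases hi : g.coeff i = 0
    · simp [hi]
    refine (hle i).trans_lt (lt_of_lt_of_le ?_ orderTop_add_le_mul)
    refine WithTop.add_lt_add_left (orderTop_ne_top.2 hi) ?_
    rw [← WithTop.coe_nsmul]
    exact coe_nsmul_lt_orderTop_pow_sub_pow hs (by simpa using he) i
  have := (lt_min h_single h_diff).trans_le min_orderTop_le_orderTop_add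
  rwa [add_sub_cancel] at this

theorem IsNewtonSlope.lt_of_orderTop_eval_lt {g : (HahnSeries Γ R)[X]} {γ γ' : Γ}
    {x : HahnSeries Γ R} (hγ' : IsNewtonSlope g γ') (hx : (γ : WithTop Γ) ≤ x.orderTop)
    (h : (g.eval x).orderTop < (g.coeff 0).orderTop) : γ < γ' := by
  by_contra! hle
  refine h.not_ge (le_orderTop_eval fun i => (hγ'.1 i).trans ?_)
  gcongr
  exact (WithTop.coe_le_coe.2 hle).trans hx

end Newton

theorem exists_isNewtonSlope {Γ R : Type*} [Field Γ] [LinearOrder Γ] [IsStrictOrderedRing Γ]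
    [CommRing R] {g : (HahnSeries Γ R)[X]} (h0 : g.coeff 0 ≠ 0)
    (hpos : ∃ i, 0 < i ∧ g.coeff i ≠ 0) : ∃ γ, IsNewtonSlope g γ := by
  classical
  set s := g.support.filter (0 < ·)
  let slope (i : ℕ) : Γ := ((g.coeff 0).order - (g.coeff i).order) / i
  obtain ⟨i₀, hi₀, hmax⟩ := s.exists_max_image slope (by
    obtain ⟨i, hi, hgi⟩ := hpos
    exact ⟨i, by simp [s, hi, hgi]⟩)
  simp only [s, Finset.mem_filter, mem_support_iff] at hi₀ hmax
  have hcoe (i : ℕ) (hgi : g.coeff i ≠ 0) :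
      (g.coeff i).orderTop + i • (slope i₀ : WithTop Γ) =
        (((g.coeff i).order + i * slope i₀ : Γ) : WithTop Γ) := by
    rw [← order_eq_orderTop_of_ne_zero hgi, ← WithTop.coe_nsmul, nsmul_eq_mul, WithTop.coe_add]
  refine ⟨slope i₀, fun i => ?_, i₀, hi₀.2, hi₀.1, ?_⟩
  · rcases eq_or_ne (g.coeff i) 0 with hgi | hgi
    · simp [hgi]
    rcases Nat.eq_zero_or_pos i with rfl | hi
    · simp
    have hslope := hmax i ⟨hgi, hi⟩
    rw [div_le_iff₀ (by exact_mod_cast hi)] at hslope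
    rw [hcoe i hgi, ← order_eq_orderTop_of_ne_zero h0, WithTop.coe_le_coe]
    linarith
  · have hi₀' : (i₀ : Γ) ≠ 0 := by exact_mod_cast hi₀.2.ne'
    rw [hcoe i₀ hi₀.1, ← order_eq_orderTop_of_ne_zero h0, WithTop.coe_eq_coe]
    simp only [slope]
    field_simp
    ring

theorem IsNewtonSlope.exists_ne_zero_isRoot_residualPoly {Γ R : Type*} [AddCommGroup Γ]
    [LinearOrder Γ] [IsOrderedAddMonoid Γ] [Field R] [IsAlgClosed R] {g : (HahnSeries Γ R)[X]}
    {γ : Γ} (hγ : IsNewtonSlope g γ) (h0 : g.coeff 0 ≠ 0) :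
    ∃ c ≠ 0, (residualPoly g γ (g.coeff 0).order).IsRoot c := by
  obtain ⟨-, i, hi, hgi, heq⟩ := hγ
  set φ := residualPoly g γ (g.coeff 0).order
  have hφi : φ.coeff i ≠ 0 := by
    rw [← order_eq_orderTop_of_ne_zero h0, ← order_eq_orderTop_of_ne_zero hgi,
      ← WithTop.coe_nsmul, ← WithTop.coe_add, WithTop.coe_eq_coe] at heq
    rw [coeff_residualPoly, heq, add_sub_cancel_right, ← leadingCoeff_eq]
    exact leadingCoeff_ne_zero.2 hgi
  have hφ0 : φ.eval 0 ≠ 0 := by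
    rw [← coeff_zero_eq_eval_zero, coeff_residualPoly, zero_smul, sub_zero, ← leadingCoeff_eq]
    exact leadingCoeff_ne_zero.2 h0
  have hdeg : φ.degree ≠ 0 := fun h =>
    hφi (coeff_eq_zero_of_degree_lt (h ▸ WithBot.coe_lt_coe.2 hi))
  obtain ⟨c, hc⟩ := IsAlgClosed.exists_root φ hdeg
  exact ⟨c, by rintro rfl; exact hφ0 hc, hc⟩

section Truncation

variable {Γ R : Type*} [LinearOrder Γ] [Zero R]

/-- `x` is an initial segment of `y`. The cut may lie in a gap of `Γ`, so `x` need not be of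
the form `truncLT q y`. -/
def IsTruncation (x y : HahnSeries Γ R) : Prop :=
  ∀ q ∈ x.support, ∀ r ≤ q, x.coeff r = y.coeff r

theorem IsTruncation.trans {x y z : HahnSeries Γ R} (hxy : IsTruncation x y)
    (hyz : IsTruncation y z) : IsTruncation x z := fun q hq r hr => by
  have hqy : q ∈ y.support := by rw [mem_support, ← hxy q hq q le_rfl]; exact hq
  rw [hxy q hq r hr, hyz q hqy r hr]

theorem truncLT_eq_of_coeff_eq {x y : HahnSeries Γ R} {q : Γ}
    (h : ∀ r < q, x.coeff r = y.coeff r) : truncLT q x = truncLT q y := by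
  ext r
  by_cases hr : r < q <;> simp [hr, h]

open Classical in
noncomputable def chainCoeff (c : Set (HahnSeries Γ R)) (r : Γ) : R :=
  if h : ∃ x ∈ c, r ∈ x.support then h.choose.coeff r else 0

variable {c : Set (HahnSeries Γ R)}

theorem exists_mem_support_of_chainCoeff_ne_zero {r : Γ} (h : chainCoeff c r ≠ 0) :
    ∃ x ∈ c, r ∈ x.support := by
  by_contra h'
  exact h (dif_neg h')

theorem chainCoeff_eq (hc : IsChain IsTruncation c) {x : HahnSeries Γ R} (hx : x ∈ c) {q r : Γ}
    (hq : q ∈ x.support) (hr : r ≤ q) : chainCoeff c r = x.coeff r := by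
  rw [chainCoeff]
  split_ifs with h
  · obtain ⟨hyc, hy⟩ := h.choose_spec
    rcases eq_or_ne x h.choose with hxy | hxy
    · rw [← hxy]
    rcases hc hx hyc hxy with hxy | hyx
    · exact (hxy q hq r hr).symm
    · exact hyx r hy r le_rfl
  · by_contra hne
    exact h ⟨x, hx, Ne.symm hne⟩

theorem isWF_support_chainCoeff (hc : IsChain IsTruncation c) :
    (Function.support (chainCoeff c)).IsWF := by
  rw [Set.isWF_iff_no_descending_seq]
  intro f hf hmem
  obtain ⟨x, hx, h0⟩ := exists_mem_support_of_chainCoeff_ne_zero (hmem 0)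
  refine Set.isWF_iff_no_descending_seq.1 x.isWF_support f hf fun n => ?_
  rw [mem_support, ← chainCoeff_eq hc hx h0 (hf.antitone (Nat.zero_le n))]
  exact hmem n

noncomputable def ofChain (c : Set (HahnSeries Γ R)) (hc : IsChain IsTruncation c) :
    HahnSeries Γ R :=
  ⟨chainCoeff c, (isWF_support_chainCoeff hc).isPWO⟩

theorem isTruncation_ofChain (hc : IsChain IsTruncation c) {x : HahnSeries Γ R} (hx : x ∈ c) :
    IsTruncation x (ofChain c hc) := fun _ hq _ hr => (chainCoeff_eq hc hx hq hr).symm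

theorem exists_mem_support_of_mem_support_ofChain (hc : IsChain IsTruncation c) {q : Γ}
    (hq : q ∈ (ofChain c hc).support) : ∃ x ∈ c, q ∈ x.support :=
  exists_mem_support_of_chainCoeff_ne_zero hq

end Truncation

section NewtonSeries

variable {Γ R : Type*} [AddCommGroup Γ] [LinearOrder Γ] [IsOrderedAddMonoid Γ] [CommRing R]
  (f : (HahnSeries Γ R)[X])

def IsNewtonStep (a : HahnSeries Γ R) (γ : Γ) (c : R) : Prop :=
  IsNewtonSlope (taylor a f) γ ∧ (residualPoly (taylor a f) γ (f.eval a).order).IsRoot c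

def IsNewtonSeries (x : HahnSeries Γ R) : Prop :=
  ∀ q ∈ x.support, IsNewtonStep f (truncLT q x) q (x.coeff q)

variable {f}

theorem IsNewtonSeries.isNewtonStep_of_coeff_eq {x y : HahnSeries Γ R} {q : Γ}
    (hx : IsNewtonSeries f x) (hq : q ∈ x.support) (h : ∀ r ≤ q, x.coeff r = y.coeff r) :
    IsNewtonStep f (truncLT q y) q (y.coeff q) := by
  rw [← truncLT_eq_of_coeff_eq fun r hr => h r hr.le, ← h q le_rfl]
  exact hx q hq

theorem IsNewtonSeries.lt_of_mem_support (hf : ∀ a, f.eval a ≠ 0) {x : HahnSeries Γ R}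
    (hx : IsNewtonSeries f x) {γ : Γ} (hγ : IsNewtonSlope (taylor x f) γ) {q : Γ}
    (hq : q ∈ x.support) : q < γ := by
  obtain ⟨hslope, hroot⟩ := hx q hq
  set b := truncLT q x
  set e := x - b - single q (x.coeff q) with he_def
  have he : (q : WithTop Γ) < e.orderTop := coe_lt_orderTop_iff_forall.2 fun r hr => by
    rcases hr.lt_or_eq with hr | rfl
    · simp [e, b, hr, hr.ne]
    · simp [e, b]
  have hstep := hslope.orderTop_lt_orderTop_eval_single_add
    (by rw [taylor_coeff_zero]; exact hf b) (by rwa [taylor_coeff_zero]) he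
  have hx_eq : single q (x.coeff q) + e + b = x := by rw [he_def]; abel
  rw [taylor_coeff_zero, taylor_eval, hx_eq] at hstep
  refine hγ.lt_of_orderTop_eval_lt (x := b - x) ?_ ?_
  · rw [← hx_eq, show b - (single q (x.coeff q) + e + b) = -(single q (x.coeff q) + e) by abel,
      orderTop_neg]
    exact (le_min orderTop_single_le he.le).trans min_orderTop_le_orderTop_add
  · rwa [taylor_eval, sub_add_cancel, taylor_coeff_zero]

theorem isNewtonSeries_ofChain {c : Set (HahnSeries Γ R)} (hc : IsChain IsTruncation c)
    (hcN : ∀ x ∈ c, IsNewtonSeries f x) : IsNewtonSeries f (ofChain c hc) := by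
  intro q hq
  obtain ⟨x, hx, hqx⟩ := exists_mem_support_of_mem_support_ofChain hc hq
  exact (hcN x hx).isNewtonStep_of_coeff_eq hqx (isTruncation_ofChain hc hx q hqx)

end NewtonSeries

section AlgClosed

variable {Γ R : Type*} [Field Γ] [LinearOrder Γ] [IsStrictOrderedRing Γ]
  [Field R] [IsAlgClosed R]
  {f : (HahnSeries Γ R)[X]}

theorem IsNewtonSeries.exists_isTruncation (hf : 0 < f.natDegree) (hroot : ∀ a, f.eval a ≠ 0)
    {m : HahnSeries Γ R} (hm : IsNewtonSeries f m) :
    ∃ m', IsNewtonSeries f m' ∧ IsTruncation m m' ∧ ¬IsTruncation m' m := by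
  have hlead : (taylor m f).coeff f.natDegree ≠ 0 := by
    rw [← natDegree_taylor f m, coeff_natDegree, leadingCoeff_taylor]
    exact Polynomial.leadingCoeff_ne_zero.2 (ne_zero_of_natDegree_gt hf)
  have h0 : (taylor m f).coeff 0 ≠ 0 := by rw [taylor_coeff_zero]; exact hroot m
  obtain ⟨γ, hγ⟩ := exists_isNewtonSlope h0 ⟨_, hf, hlead⟩
  obtain ⟨c, hc0, hc⟩ := hγ.exists_ne_zero_isRoot_residualPoly h0
  rw [taylor_coeff_zero] at hc
  have hlt (q : Γ) (hq : q ∈ m.support) : q < γ := hm.lt_of_mem_support hroot hγ hq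
  have hm_zero (r : Γ) (hr : γ ≤ r) : m.coeff r = 0 := by
    by_contra h
    exact (hlt r h).not_ge hr
  set m' := m + single γ c
  have hagree (r : Γ) (hr : r < γ) : m'.coeff r = m.coeff r := by
    simp [m', coeff_single_of_ne hr.ne]
  have hm'γ : m'.coeff γ = c := by simp [m', hm_zero γ le_rfl]
  have htrunc : IsTruncation m m' := fun q hq r hr => (hagree r (hr.trans_lt (hlt q hq))).symm
  refine ⟨m', fun q hq => ?_, htrunc, fun h => ?_⟩
  · rcases lt_or_ge q γ with hqγ | hqγ
    · have hqm : q ∈ m.support := by rwa [mem_support, ← hagree q hqγ]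
      exact hm.isNewtonStep_of_coeff_eq hqm (htrunc q hqm)
    obtain rfl : q = γ := by
      by_contra hne
      simp [m', hm_zero q hqγ, coeff_single_of_ne hne] at hq
    have : truncLT q m' = m := by
      ext r
      by_cases hr : r < q
      · simp [hr, hagree]
      · simp [hr, hm_zero r (not_lt.1 hr)]
    rw [this, hm'γ]
    exact ⟨hγ, hc⟩
  · have hγm' : γ ∈ m'.support := by rwa [mem_support, hm'γ]
    exact (hlt γ (by rwa [mem_support, ← h γ hγm' γ le_rfl])).false

theorem exists_isRoot_of_natDegree_pos (hf : 0 < f.natDegree) : ∃ x, f.IsRoot x := by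
  by_contra! hroot
  obtain ⟨⟨m, hm⟩, hmax⟩ := exists_maximal_of_chains_bounded
    (r := fun x y : {x // IsNewtonSeries f x} => IsTruncation x.1 y.1)
    (fun c hc => by
      have hc' : IsChain IsTruncation (Subtype.val '' c) := by
        rintro _ ⟨x, hx, rfl⟩ _ ⟨y, hy, rfl⟩ hne
        exact hc hx hy (ne_of_apply_ne _ hne)
      refine ⟨⟨ofChain _ hc', isNewtonSeries_ofChain hc' ?_⟩, fun x hx => ?_⟩
      · rintro _ ⟨x, -, rfl⟩
        exact x.2
      · exact isTruncation_ofChain hc' ⟨x, hx, rfl⟩)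
    (fun hxy hyz => hxy.trans hyz)
  obtain ⟨m', hm', hmm', hm'm⟩ := hm.exists_isTruncation hf hroot
  exact hm'm (hmax ⟨m', hm'⟩ hmm')

theorem isAlgClosed : IsAlgClosed (HahnSeries Γ R) :=
  IsAlgClosed.of_exists_root _ fun _ _ hirr =>
    exists_isRoot_of_natDegree_pos (natDegree_pos_iff_degree_pos.2 (degree_pos_of_irreducible hirr))

end AlgClosed

end HahnSeries

theorem hahnSeries_isAlgClosed_general (E : Type*) [Field E] [IsAlgClosed E] :
    IsAlgClosed (HahnSeries ℚ E) :=
  HahnSeries.isAlgClosed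

/-- Let `E` be an algebraically closed field of characteristic `p`. Then the field
`HahnSeries ℚ E` of Hahn series over `E` with exponents in `ℚ` is algebraically closed. -/
theorem hahnSeries_isAlgClosed (p : ℕ) [Fact p.Prime] (E : Type*) [Field E] [CharP E p]
    [IsAlgClosed E] :
    IsAlgClosed (HahnSeries ℚ E) :=
  hahnSeries_isAlgClosed_general E
end

section
/- Let F be a field of characteristic p and let q = p^e with e ≥ 1. For each integer n ≥ 1, let A_n ⊆ ℚ be the set of rationals of the form 1/(q−1) − q^{−k_1} − ⋯ − q^{−k_{n−1}} where 0 < k_1 < ⋯ < k_{n−1} are integers (so A_1 = {1/(q−1)}). Then: (a) A_n is a well-ordered subset of ℚ, so that the Hahn series y_n ∈ HahnSeries ℚ F with coefficient 1 at each element of A_n and 0 elsewhere is well defined; (b) y_1^q = (single 1 1) · y_1; and (c) for every n ≥ 2, y_n^q − (single 1 1) · y_n = y_{n−1}. -/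
/-!
The Frobenius `x ↦ x ^ q` acts on Hahn series over a ring of characteristic `p` by
`(x ^ q).coeff (q • g) = x.coeff g ^ q`, so `y_n ^ q` is the indicator series of `q • A_n`, while
`T * y_n` is that of `1 + A_n`. Multiplying `1/(q-1) - ∑ q^{-k_j}` by `q` gives
`1/(q-1) + 1 - ∑ q^{-(k_j - 1)}`, which lies in `A_{n-1}` if `k_1 = 1` and in `1 + A_n` otherwise;
hence `q • A_n` is the union of `1 + A_n` and `A_{n-1}`, disjoint since all `A_m ⊆ (0, 1]`.
Well-ordering holds because `A_n` is the image of `ℕ^{n-1}`, well-quasi-ordered by Dickson's lemma,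
under a monotone map.
-/

noncomputable section

/-- The set `A_n ⊆ ℚ` of rationals of the form `1/(q-1) - q^{-k_1} - ⋯ - q^{-k_{n-1}}`
with `0 < k_1 < ⋯ < k_{n-1}` integers (so `A_1 = {1/(q-1)}`). -/
def lubinTateExpSet (q n : ℕ) : Set ℚ :=
  {x | ∃ κ : Fin (n - 1) → ℕ, StrictMono κ ∧ (∀ j, 0 < κ j) ∧
    x = 1 / ((q : ℚ) - 1) - ∑ j, (q : ℚ) ^ (-(κ j : ℤ))}

namespace HahnSeries

variable {Γ R : Type*} [AddCommMonoid Γ] [LinearOrder Γ] [IsOrderedCancelAddMonoid Γ]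

theorem support_pow_subset_Iio [Semiring R] {x : HahnSeries Γ R} {g : Γ}
    (hx : x.support ⊆ Set.Iio g) {n : ℕ} (hn : n ≠ 0) :
    (x ^ n).support ⊆ Set.Iio (n • g) := by
  induction n with
  | zero => exact absurd rfl hn
  | succ n ih =>
    rcases eq_or_ne n 0 with rfl | hn
    · simpa using hx
    rw [pow_succ, succ_nsmul]
    refine support_mul_subset.trans ?_
    rintro _ ⟨a, ha, b, hb, rfl⟩
    exact add_lt_add (ih hn ha) (hx hb)

theorem support_pow_subset_Ioi [Semiring R] {x : HahnSeries Γ R} {g : Γ}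
    (hx : x.support ⊆ Set.Ioi g) {n : ℕ} (hn : n ≠ 0) :
    (x ^ n).support ⊆ Set.Ioi (n • g) := by
  induction n with
  | zero => exact absurd rfl hn
  | succ n ih =>
    rcases eq_or_ne n 0 with rfl | hn
    · simpa using hx
    rw [pow_succ, succ_nsmul]
    refine support_mul_subset.trans ?_
    rintro _ ⟨a, ha, b, hb, rfl⟩
    exact add_lt_add (ih hn ha) (hx hb)

theorem coeff_pow_expChar_pow_nsmul [CommRing R] (p : ℕ) [ExpChar R p] (e : ℕ)
    (x : HahnSeries Γ R) (g : Γ) :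
    (x ^ p ^ e).coeff (p ^ e • g) = x.coeff g ^ p ^ e := by
  classical
  -- Split `x` at `g`: the `q`-th powers of the parts below and above `g` live below and above `q • g`.
  have : ExpChar (HahnSeries Γ R) p := expChar_of_injective_ringHom C_injective p
  have hq : p ^ e ≠ 0 := pow_ne_zero _ (expChar_ne_zero R p)
  set low := truncLT g x
  set high := x - low - single g (x.coeff g)
  have hlow : low.support ⊆ Set.Iio g := fun a ha => ((support_truncLT g x).le ha).2
  have hhigh : high.support ⊆ Set.Ioi g := by
    intro a ha
    by_contra h
    rcases (not_lt.1 h).lt_or_eq with h | rfl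
    · simp [high, low, coeff_truncLT_of_lt h, coeff_single_of_ne h.ne] at ha
    · simp [high, low] at ha
  have hsplit : x = low + single g (x.coeff g) + high := by simp only [high]; abel
  conv_lhs => rw [hsplit]
  rw [add_pow_expChar_pow, add_pow_expChar_pow, coeff_add, coeff_add, single_pow,
    coeff_single_same,
    Function.notMem_support.1 fun h => (support_pow_subset_Iio hlow hq h).false,
    Function.notMem_support.1 fun h => (support_pow_subset_Ioi hhigh hq h).false,
    zero_add, add_zero]

theorem coeff_pow_expChar_pow_eq_indicator [CommRing R] (p : ℕ) [ExpChar R p] {e q : ℕ}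
    (hq : q = p ^ e) {A : Set ℚ} {x : HahnSeries ℚ R} (hx : x.coeff = A.indicator fun _ => 1) :
    (x ^ q).coeff = ((· / (q : ℚ)) ⁻¹' A).indicator fun _ => 1 := by
  subst hq
  have hq₀ : p ^ e ≠ 0 := pow_ne_zero _ (expChar_ne_zero R p)
  ext g
  have hg := coeff_pow_expChar_pow_nsmul p e x (g / (p ^ e : ℕ))
  rw [nsmul_eq_mul, mul_div_cancel₀ _ (by exact_mod_cast hq₀)] at hg
  rw [hg, hx]
  by_cases h : g ∈ (· / ((p ^ e : ℕ) : ℚ)) ⁻¹' A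
  · rw [Set.indicator_of_mem h, Set.indicator_of_mem (Set.mem_preimage.1 h), one_pow]
  · rw [Set.indicator_of_notMem h, Set.indicator_of_notMem (mt Set.mem_preimage.2 h),
      zero_pow hq₀]

end HahnSeries

theorem StrictMono.exists_eq_add_one {α : Type*} [Preorder α] {κ : α → ℕ} (hκ : StrictMono κ)
    (hpos : ∀ j, 0 < κ j) : ∃ μ : α → ℕ, StrictMono μ ∧ κ = fun j => μ j + 1 :=
  ⟨fun j => κ j - 1, fun _ _ h => Nat.sub_lt_sub_right (hpos _) (hκ h),
    funext fun j => (Nat.sub_add_cancel (hpos j)).symm⟩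

theorem sum_pow_lt_inv_one_sub_of_injective {K ι : Type*} [Field K] [LinearOrder K]
    [IsStrictOrderedRing K] [Fintype ι] {r : K} (hr₀ : 0 < r) (hr₁ : r < 1) {μ : ι → ℕ}
    (hμ : Function.Injective μ) : ∑ j, r ^ μ j < (1 - r)⁻¹ := by
  classical
  obtain ⟨N, hN⟩ := (Finset.univ.image μ).exists_nat_subset_range
  calc ∑ j, r ^ μ j = ∑ k ∈ Finset.univ.image μ, r ^ k :=
        (Finset.sum_image fun _ _ _ _ h => hμ h).symm
    _ ≤ ∑ k ∈ Finset.range N, r ^ k :=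
      Finset.sum_le_sum_of_subset_of_nonneg hN fun _ _ _ => (pow_pos hr₀ _).le
    _ < (1 - r)⁻¹ := by
      rw [← one_div, lt_div_iff₀ (sub_pos.2 hr₁)]
      linear_combination -(geom_sum_mul r N) + pow_pos hr₀ N

section LubinTateExpSet

variable {q : ℕ}

theorem isWF_lubinTateExpSet (hq : 1 ≤ q) (n : ℕ) : (lubinTateExpSet q n).IsWF := by
  let f : (Fin (n - 1) → ℕ) → ℚ := fun κ => 1 / ((q : ℚ) - 1) - ∑ j, (q : ℚ) ^ (-(κ j : ℤ))
  have hf : Monotone f := fun κ κ' h => sub_le_sub_left (Finset.sum_le_sum fun j _ =>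
    zpow_le_zpow_right₀ (by exact_mod_cast hq) (neg_le_neg (by exact_mod_cast h j))) _
  refine ((Set.isPWO_of_wellQuasiOrderedLE Set.univ).image_of_monotone hf).isWF.mono ?_
  rintro x ⟨κ, -, -, rfl⟩
  exact ⟨κ, trivial, rfl⟩

theorem mem_lubinTateExpSet_succ_iff {m : ℕ} {x : ℚ} :
    x ∈ lubinTateExpSet q (m + 1) ↔ ∃ μ : Fin m → ℕ, StrictMono μ ∧
      x = 1 / ((q : ℚ) - 1) - ∑ j, (q : ℚ)⁻¹ ^ (μ j + 1) := by
  have hpow (k : ℕ) : (q : ℚ) ^ (-(k : ℤ)) = (q : ℚ)⁻¹ ^ k := by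
    rw [zpow_neg, zpow_natCast, inv_pow]
  simp only [lubinTateExpSet, Set.mem_ofPred_eq, hpow]
  constructor
  · rintro ⟨κ, hκ, hpos, rfl⟩
    obtain ⟨μ, hμ, rfl⟩ := hκ.exists_eq_add_one hpos
    exact ⟨μ, hμ, rfl⟩
  · rintro ⟨μ, hμ, rfl⟩
    exact ⟨fun j => μ j + 1, hμ.add_const 1, fun _ => Nat.succ_pos _, rfl⟩

theorem lubinTateExpSet_subset_Ioc (hq : 1 < q) (m : ℕ) :
    lubinTateExpSet q (m + 1) ⊆ Set.Ioc 0 1 := by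
  have hq' : (1 : ℚ) < q := by exact_mod_cast hq
  have hr₀ : (0 : ℚ) < (q : ℚ)⁻¹ := inv_pos.2 (by linarith)
  intro x hx
  obtain ⟨μ, hμ, rfl⟩ := mem_lubinTateExpSet_succ_iff.1 hx
  have hsum := sum_pow_lt_inv_one_sub_of_injective hr₀ (inv_lt_one_of_one_lt₀ hq') hμ.injective
  have hc : (q : ℚ)⁻¹ * (1 - (q : ℚ)⁻¹)⁻¹ = 1 / ((q : ℚ) - 1) := by
    field_simp
  have hc₁ : 1 / ((q : ℚ) - 1) ≤ 1 := by
    rw [div_le_one (by linarith)]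
    linarith [show (2 : ℚ) ≤ q by exact_mod_cast hq]
  simp only [pow_succ, ← Finset.sum_mul, Set.mem_Ioc, sub_pos, sub_le_iff_le_add]
  constructor
  · rw [← hc, mul_comm]
    exact mul_lt_mul_of_pos_left hsum hr₀
  · have : 0 ≤ ∑ j, (q : ℚ)⁻¹ ^ μ j := Finset.sum_nonneg fun _ _ => by positivity
    nlinarith

theorem disjoint_preimage_sub_one_lubinTateExpSet (hq : 1 < q) (m k : ℕ) :
    Disjoint ((· - 1) ⁻¹' lubinTateExpSet q (m + 1)) (lubinTateExpSet q (k + 1)) :=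
  Set.disjoint_left.2 fun g h₁ h₂ => by
    linarith [(lubinTateExpSet_subset_Ioc hq _ h₁).1, (lubinTateExpSet_subset_Ioc hq _ h₂).2]

theorem div_eq_sub_sum_inv_pow_succ_iff (hq : 1 < q) {ι : Type*} [Fintype ι] (μ : ι → ℕ)
    (g : ℚ) :
    g / q = 1 / ((q : ℚ) - 1) - ∑ j, (q : ℚ)⁻¹ ^ (μ j + 1) ↔
      g = 1 / ((q : ℚ) - 1) + 1 - ∑ j, (q : ℚ)⁻¹ ^ μ j := by
  have hq₀ : (q : ℚ) ≠ 0 := by positivity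
  have hq₁ : (q : ℚ) - 1 ≠ 0 := sub_ne_zero.2 (by exact_mod_cast hq.ne')
  rw [div_eq_iff hq₀, sub_mul, Finset.sum_mul]
  simp only [pow_succ, mul_assoc, inv_mul_cancel₀ hq₀, mul_one]
  field_simp
  ring_nf

theorem preimage_div_lubinTateExpSet_one (hq : 1 < q) :
    (· / (q : ℚ)) ⁻¹' lubinTateExpSet q 1 = (· - 1) ⁻¹' lubinTateExpSet q 1 := by
  ext g
  simp only [Set.mem_preimage, mem_lubinTateExpSet_succ_iff, div_eq_sub_sum_inv_pow_succ_iff hq]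
  refine exists_congr fun μ => and_congr_right fun _ => ?_
  simp [sub_eq_iff_eq_add]

theorem preimage_div_lubinTateExpSet_add_two (hq : 1 < q) (m : ℕ) :
    (· / (q : ℚ)) ⁻¹' lubinTateExpSet q (m + 2) =
      (· - 1) ⁻¹' lubinTateExpSet q (m + 2) ∪ lubinTateExpSet q (m + 1) := by
  ext g
  simp only [Set.mem_preimage, Set.mem_union, mem_lubinTateExpSet_succ_iff,
    div_eq_sub_sum_inv_pow_succ_iff hq]
  constructor
  · rintro ⟨μ, hμ, rfl⟩
    rcases Nat.eq_zero_or_pos (μ 0) with h0 | h0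
    · right
      obtain ⟨ν, hν, htail⟩ := (hμ.comp Fin.strictMono_succ).exists_eq_add_one
        fun j => h0 ▸ hμ (Fin.succ_pos j)
      refine ⟨ν, hν, ?_⟩
      rw [Fin.sum_univ_succ, h0]
      simp only [show ∀ j, μ j.succ = ν j + 1 from congrFun htail, pow_zero]
      ring
    · left
      obtain ⟨ν, hν, rfl⟩ :=
        hμ.exists_eq_add_one fun j => h0.trans_le (hμ.monotone (Fin.zero_le j))
      exact ⟨ν, hν, by ring⟩
  · rintro (⟨ν, hν, hg⟩ | ⟨ν, hν, rfl⟩)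
    · exact ⟨fun j => ν j + 1, hν.add_const 1, by linear_combination hg⟩
    · refine ⟨Fin.cons 0 fun j => ν j + 1,
        Fin.strictMono_cons.2 ⟨fun _ => Nat.succ_pos _, hν.add_const 1⟩, ?_⟩
      rw [Fin.sum_univ_succ]
      simp only [Fin.cons_zero, Fin.cons_succ, pow_zero]
      ring

end LubinTateExpSet

/-- Let `F` be a field of characteristic `p` and `q = p^e`, `e ≥ 1`. Then (a) each `A_n`
(`n ≥ 1`) is well-ordered, so the Hahn series `y_n` with coefficient `1` exactly on `A_n` is
well defined; (b) `y_1^q = T·y_1`; and (c) for `n ≥ 2`, `y_n^q - T·y_n = y_{n-1}`,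
where `T = single 1 1`. -/
theorem lubinTate_hahnSeries_roots (p : ℕ) [Fact p.Prime] (F : Type*) [Field F] [CharP F p]
    (e : ℕ) (he : 1 ≤ e) (q : ℕ) (hq : q = p ^ e) :
    (∀ n : ℕ, 1 ≤ n → (lubinTateExpSet q n).IsWF) ∧
    ∀ y : ℕ → HahnSeries ℚ F,
      (∀ n : ℕ, (y n).coeff = Set.indicator (lubinTateExpSet q n) fun _ => (1 : F)) →
      (y 1) ^ q = HahnSeries.single (1 : ℚ) 1 * y 1 ∧
      ∀ n : ℕ, 2 ≤ n →
        (y n) ^ q - HahnSeries.single (1 : ℚ) 1 * y n = y (n - 1) := by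
  have hq₁ : 1 < q := hq ▸ Nat.one_lt_pow (by omega) (Fact.out : p.Prime).one_lt
  refine ⟨fun n _ => isWF_lubinTateExpSet hq₁.le n, fun y hy => ?_⟩
  have hpow (n : ℕ) := HahnSeries.coeff_pow_expChar_pow_eq_indicator p hq (hy n)
  have hT (n : ℕ) : (HahnSeries.single 1 1 * y n).coeff =
      ((· - 1) ⁻¹' lubinTateExpSet q n).indicator fun _ => 1 :=
    funext fun g => by rw [HahnSeries.coeff_single_mul, one_mul, hy]; rfl
  refine ⟨HahnSeries.ext ?_, fun n hn => ?_⟩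
  · rw [hpow, hT, preimage_div_lubinTateExpSet_one hq₁]
  · obtain ⟨m, rfl⟩ := Nat.exists_eq_add_of_le' hn
    show _ = y (m + 1)
    refine HahnSeries.ext (funext fun g => ?_)
    rw [HahnSeries.coeff_sub, hpow, hT, hy, preimage_div_lubinTateExpSet_add_two hq₁,
      Set.indicator_union_of_disjoint (disjoint_preimage_sub_one_lubinTateExpSet hq₁ _ _),
      add_sub_cancel_left]

end
end
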